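/- arXiv:2208.09749 — 4 statements merged into one kernel-verified Lean document; each statement's English description precedes it below -/
import Mathlib

section
/- A Bayes-Nash equilibrium of the n-stage block Bayesian game induces a Bayes-Nash equilibrium at every stage: if (τ_1, τ_2) is a Bayes-Nash equilibrium of the game G^σ in which each decoder i chooses a distribution over action sequences in V_i^n given its type, and the cost is the average of per-stage costs, then for every t ∈ {1,...,n} the marginal stage strategies (τ_{1,t}, τ_{2,t}) form a Bayes-Nash equilibrium of the stage-t game G^{σ,t}. -/
open Finset

/-- A probability distribution on a finite set, given as a weight function. -/
def IsDist {V : Type*} [Fintype V] (q : V → ℝ) : Prop :=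
  (∀ v, 0 ≤ q v) ∧ ∑ v, q v = 1

variable {U M0 M1 M2 V1 V2 : Type*}
variable [Fintype U] [Fintype M0] [Fintype M1] [Fintype M2] [Fintype V1] [Fintype V2]

/-- Expected `σ`-cost of decoder 1 with type `(m₀, m₁)` in the `n`-stage block game:
the joint weight `P uⁿ m₀ m₁ m₂` is the distribution of `(Uⁿ, M₀, M₁, M₂)` induced by
the source and the encoding `σ`, the decoders use behavioral strategies `τ₁, τ₂`,
and the cost is the average of the per-stage costs. -/
noncomputable def PsiBlock1 (n : ℕ)
    (P : (Fin n → U) → M0 → M1 → M2 → ℝ) (c1 : U → V1 → V2 → ℝ)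
    (τ1 : M0 → M1 → (Fin n → V1) → ℝ) (τ2 : M0 → M2 → (Fin n → V2) → ℝ)
    (m0 : M0) (m1 : M1) : ℝ :=
  ∑ un : Fin n → U, ∑ m2 : M2, ∑ v1n : Fin n → V1, ∑ v2n : Fin n → V2,
    P un m0 m1 m2 * τ1 m0 m1 v1n * τ2 m0 m2 v2n *
      ((1 / (n : ℝ)) * ∑ t, c1 (un t) (v1n t) (v2n t))

/-- Expected `σ`-cost of decoder 2 with type `(m₀, m₂)` in the block game. -/
noncomputable def PsiBlock2 (n : ℕ)
    (P : (Fin n → U) → M0 → M1 → M2 → ℝ) (c2 : U → V1 → V2 → ℝ)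
    (τ1 : M0 → M1 → (Fin n → V1) → ℝ) (τ2 : M0 → M2 → (Fin n → V2) → ℝ)
    (m0 : M0) (m2 : M2) : ℝ :=
  ∑ un : Fin n → U, ∑ m1 : M1, ∑ v1n : Fin n → V1, ∑ v2n : Fin n → V2,
    P un m0 m1 m2 * τ1 m0 m1 v1n * τ2 m0 m2 v2n *
      ((1 / (n : ℝ)) * ∑ t, c2 (un t) (v1n t) (v2n t))

/-- Bayes-Nash equilibrium of the block game `G^σ`: each decoder's behavioral
strategy minimizes its expected cost against the other's, for every type. -/
def IsBNEBlock (n : ℕ)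
    (P : (Fin n → U) → M0 → M1 → M2 → ℝ) (c1 c2 : U → V1 → V2 → ℝ)
    (τ1 : M0 → M1 → (Fin n → V1) → ℝ) (τ2 : M0 → M2 → (Fin n → V2) → ℝ) : Prop :=
  (∀ τ1' : M0 → M1 → (Fin n → V1) → ℝ, (∀ m0 m1, IsDist (τ1' m0 m1)) →
      ∀ m0 m1, PsiBlock1 n P c1 τ1 τ2 m0 m1 ≤ PsiBlock1 n P c1 τ1' τ2 m0 m1) ∧
  (∀ τ2' : M0 → M2 → (Fin n → V2) → ℝ, (∀ m0 m2, IsDist (τ2' m0 m2)) →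
      ∀ m0 m2, PsiBlock2 n P c2 τ1 τ2 m0 m2 ≤ PsiBlock2 n P c2 τ1 τ2' m0 m2)

/-- Expected cost of decoder 1 in the stage-`t` game `G^{σ,t}`. -/
noncomputable def PsiStage1 (n : ℕ)
    (P : (Fin n → U) → M0 → M1 → M2 → ℝ) (c1 : U → V1 → V2 → ℝ)
    (σ1 : M0 → M1 → V1 → ℝ) (σ2 : M0 → M2 → V2 → ℝ)
    (t : Fin n) (m0 : M0) (m1 : M1) : ℝ :=
  ∑ un : Fin n → U, ∑ m2 : M2, ∑ v1 : V1, ∑ v2 : V2,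
    P un m0 m1 m2 * σ1 m0 m1 v1 * σ2 m0 m2 v2 * c1 (un t) v1 v2

/-- Expected cost of decoder 2 in the stage-`t` game `G^{σ,t}`. -/
noncomputable def PsiStage2 (n : ℕ)
    (P : (Fin n → U) → M0 → M1 → M2 → ℝ) (c2 : U → V1 → V2 → ℝ)
    (σ1 : M0 → M1 → V1 → ℝ) (σ2 : M0 → M2 → V2 → ℝ)
    (t : Fin n) (m0 : M0) (m2 : M2) : ℝ :=
  ∑ un : Fin n → U, ∑ m1 : M1, ∑ v1 : V1, ∑ v2 : V2,
    P un m0 m1 m2 * σ1 m0 m1 v1 * σ2 m0 m2 v2 * c2 (un t) v1 v2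

/-- Bayes-Nash equilibrium of the stage-`t` game `G^{σ,t}`. -/
def IsBNEStage (n : ℕ)
    (P : (Fin n → U) → M0 → M1 → M2 → ℝ) (c1 c2 : U → V1 → V2 → ℝ)
    (t : Fin n) (σ1 : M0 → M1 → V1 → ℝ) (σ2 : M0 → M2 → V2 → ℝ) : Prop :=
  (∀ σ1' : M0 → M1 → V1 → ℝ, (∀ m0 m1, IsDist (σ1' m0 m1)) →
      ∀ m0 m1, PsiStage1 n P c1 σ1 σ2 t m0 m1 ≤ PsiStage1 n P c1 σ1' σ2 t m0 m1) ∧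
  (∀ σ2' : M0 → M2 → V2 → ℝ, (∀ m0 m2, IsDist (σ2' m0 m2)) →
      ∀ m0 m2, PsiStage2 n P c2 σ1 σ2 t m0 m2 ≤ PsiStage2 n P c2 σ1 σ2' t m0 m2)

/-- Marginal at stage `t` of a block behavioral strategy. -/
noncomputable def stageMarginal1 [DecidableEq V1] (n : ℕ)
    (τ1 : M0 → M1 → (Fin n → V1) → ℝ) (t : Fin n) (m0 : M0) (m1 : M1) (v1 : V1) : ℝ :=
  ∑ v1n : Fin n → V1, if v1n t = v1 then τ1 m0 m1 v1n else 0

/-- Marginal at stage `t` of a block behavioral strategy of decoder 2. -/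
noncomputable def stageMarginal2 [DecidableEq V2] (n : ℕ)
    (τ2 : M0 → M2 → (Fin n → V2) → ℝ) (t : Fin n) (m0 : M0) (m2 : M2) (v2 : V2) : ℝ :=
  ∑ v2n : Fin n → V2, if v2n t = v2 then τ2 m0 m2 v2n else 0



section AuxMarg
variable {V : Type*} [Fintype V] [DecidableEq V]

/-- Marginal at stage `t`. -/
noncomputable def marg (n : ℕ) (τ : (Fin n → V) → ℝ) (t : Fin n) (v : V) : ℝ :=
  ∑ w : Fin n → V, if w t = v then τ w else 0

lemma marg_mul_sum (n : ℕ) (τ : (Fin n → V) → ℝ) (t : Fin n) (g : V → ℝ) :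
    ∑ v, marg n τ t v * g v = ∑ w : Fin n → V, τ w * g (w t) := by
  unfold marg
  simp_rw [Finset.sum_mul, ite_mul, zero_mul]
  rw [Finset.sum_comm]
  simp

noncomputable def modStrat (n : ℕ) (t : Fin n) (τ : (Fin n → V) → ℝ) (q : V → ℝ)
    (w : Fin n → V) : ℝ :=
  q (w t) * ∑ a : V, τ (Function.update w t a)

omit [Fintype V] in
lemma esymm_apply_self (n : ℕ) (t : Fin n) (b : V) (r : {j : Fin n // j ≠ t} → V) :
    (Equiv.funSplitAt t V).symm (b, r) t = b := by
  simp [Equiv.funSplitAt, Equiv.piSplitAt]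

omit [Fintype V] [DecidableEq V] in
lemma esymm_apply_ne (n : ℕ) (t : Fin n) (b : V) (r : {j : Fin n // j ≠ t} → V)
    {s : Fin n} (hs : s ≠ t) :
    (Equiv.funSplitAt t V).symm (b, r) s = r ⟨s, hs⟩ := by
  simp [Equiv.funSplitAt, Equiv.piSplitAt, hs]

omit [Fintype V] in
lemma update_esymm (n : ℕ) (t : Fin n) (b a : V) (r : {j : Fin n // j ≠ t} → V) :
    Function.update ((Equiv.funSplitAt t V).symm (b, r)) t a
      = (Equiv.funSplitAt t V).symm (a, r) := by
  funext j
  rcases eq_or_ne j t with h | h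
  · subst h; simp [esymm_apply_self]
  · simp [Function.update, h, esymm_apply_ne _ _ _ _ h]

omit [DecidableEq V] in
lemma sum_split (n : ℕ) (t : Fin n) (F : (Fin n → V) → ℝ) :
    ∑ w : Fin n → V, F w
      = ∑ b : V, ∑ r : {j : Fin n // j ≠ t} → V, F ((Equiv.funSplitAt t V).symm (b, r)) := by
  rw [← Equiv.sum_comp (Equiv.funSplitAt t V).symm F, Fintype.sum_prod_type]

lemma sum_modStrat (n : ℕ) (t : Fin n) (τ : (Fin n → V) → ℝ) (q : V → ℝ) :
    ∑ w : Fin n → V, modStrat n t τ q w = (∑ v, q v) * ∑ w : Fin n → V, τ w := by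
  rw [sum_split n t, sum_split n t (F := τ)]
  unfold modStrat
  simp_rw [esymm_apply_self, update_esymm, ← Finset.mul_sum]
  rw [← Finset.sum_mul]
  congr 1
  rw [Finset.sum_comm]

lemma marg_modStrat_self (n : ℕ) (t : Fin n) (τ : (Fin n → V) → ℝ) (q : V → ℝ)
    (hτ : ∑ w : Fin n → V, τ w = 1) (v : V) :
    marg n (modStrat n t τ q) t v = q v := by
  unfold marg modStrat
  rw [sum_split n t]
  simp_rw [esymm_apply_self, update_esymm]
  rw [Finset.sum_comm]
  simp only [Finset.sum_ite_eq', Finset.mem_univ, if_true]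
  rw [← Finset.mul_sum]
  have h : ∑ r : {j : Fin n // j ≠ t} → V, ∑ a : V, τ ((Equiv.funSplitAt t V).symm (a, r)) = 1 := by
    rw [Finset.sum_comm, ← sum_split n t, hτ]
  rw [h, mul_one]

lemma marg_modStrat_ne (n : ℕ) (t : Fin n) (τ : (Fin n → V) → ℝ) (q : V → ℝ)
    (hq : ∑ v, q v = 1) {s : Fin n} (hs : s ≠ t) (v : V) :
    marg n (modStrat n t τ q) s v = marg n τ s v := by
  unfold marg modStrat
  rw [sum_split n t, sum_split n t (F := fun w => if w s = v then τ w else 0)]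
  simp_rw [esymm_apply_self, update_esymm, esymm_apply_ne n t _ _ hs]
  rw [Finset.sum_comm]
  conv_rhs => rw [Finset.sum_comm]
  refine Finset.sum_congr rfl fun r _ => ?_
  split_ifs with h
  · rw [← Finset.sum_mul, hq, one_mul]
  · simp

end AuxMarg

section AuxCore
variable {V1 V2 : Type*} [Fintype V1] [DecidableEq V1] [Fintype V2] [DecidableEq V2]

lemma key_stage (n : ℕ) (τ1 : (Fin n → V1) → ℝ) (τ2 : (Fin n → V2) → ℝ) (t : Fin n)
    (f : V1 → V2 → ℝ) :
    ∑ v1, ∑ v2, marg n τ1 t v1 * marg n τ2 t v2 * f v1 v2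
      = ∑ w1 : Fin n → V1, ∑ w2 : Fin n → V2, τ1 w1 * τ2 w2 * f (w1 t) (w2 t) := by
  have h1 : ∀ v1, ∑ v2, marg n τ2 t v2 * f v1 v2 = ∑ w2 : Fin n → V2, τ2 w2 * f v1 (w2 t) :=
    fun v1 => marg_mul_sum n τ2 t (f v1)
  calc ∑ v1, ∑ v2, marg n τ1 t v1 * marg n τ2 t v2 * f v1 v2
      = ∑ v1, marg n τ1 t v1 * ∑ v2, marg n τ2 t v2 * f v1 v2 := by
        simp_rw [Finset.mul_sum, mul_assoc]
    _ = ∑ v1, marg n τ1 t v1 * ∑ w2 : Fin n → V2, τ2 w2 * f v1 (w2 t) := by simp_rw [h1]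
    _ = ∑ w1 : Fin n → V1, τ1 w1 * ∑ w2 : Fin n → V2, τ2 w2 * f (w1 t) (w2 t) :=
        marg_mul_sum n τ1 t _
    _ = _ := by simp_rw [Finset.mul_sum, mul_assoc]

set_option maxHeartbeats 1000000 in
lemma core_one (n : ℕ) (A : ℝ) (τ1 : (Fin n → V1) → ℝ) (τ2 : (Fin n → V2) → ℝ)
    (c : Fin n → V1 → V2 → ℝ) :
    ∑ w1 : Fin n → V1, ∑ w2 : Fin n → V2,
        A * τ1 w1 * τ2 w2 * ((1 / (n : ℝ)) * ∑ t, c t (w1 t) (w2 t))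
      = ∑ t, (1 / (n : ℝ)) * ∑ v1, ∑ v2,
          A * marg n τ1 t v1 * marg n τ2 t v2 * c t v1 v2 := by
  calc ∑ w1 : Fin n → V1, ∑ w2 : Fin n → V2,
        A * τ1 w1 * τ2 w2 * ((1 / (n : ℝ)) * ∑ t, c t (w1 t) (w2 t))
      = ∑ w1 : Fin n → V1, ∑ w2 : Fin n → V2, ∑ t,
          τ1 w1 * τ2 w2 * ((1 / (n : ℝ)) * (A * c t (w1 t) (w2 t))) := by
        refine Finset.sum_congr rfl fun w1 _ => Finset.sum_congr rfl fun w2 _ => ?_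
        rw [Finset.mul_sum, Finset.mul_sum]
        exact Finset.sum_congr rfl fun t _ => by ring
    _ = ∑ w1 : Fin n → V1, ∑ t, ∑ w2 : Fin n → V2,
          τ1 w1 * τ2 w2 * ((1 / (n : ℝ)) * (A * c t (w1 t) (w2 t))) :=
        Finset.sum_congr rfl fun w1 _ => Finset.sum_comm
    _ = ∑ t, ∑ w1 : Fin n → V1, ∑ w2 : Fin n → V2,
          τ1 w1 * τ2 w2 * ((1 / (n : ℝ)) * (A * c t (w1 t) (w2 t))) :=
        Finset.sum_comm
    _ = ∑ t, ∑ v1, ∑ v2,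
          marg n τ1 t v1 * marg n τ2 t v2 * ((1 / (n : ℝ)) * (A * c t v1 v2)) := by
        exact Finset.sum_congr rfl fun t _ =>
          (key_stage n τ1 τ2 t (fun v1 v2 => (1 / (n : ℝ)) * (A * c t v1 v2))).symm
    _ = _ := by
        refine Finset.sum_congr rfl fun t _ => ?_
        rw [Finset.mul_sum]
        refine Finset.sum_congr rfl fun v1 _ => ?_
        rw [Finset.mul_sum]
        exact Finset.sum_congr rfl fun v2 _ => by ring

lemma core_two {ι κ : Type*} [Fintype ι] [Fintype κ] (n : ℕ) (A : ι → κ → ℝ)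
    (τ1 : κ → (Fin n → V1) → ℝ) (τ2 : κ → (Fin n → V2) → ℝ)
    (c : ι → Fin n → V1 → V2 → ℝ) :
    ∑ i, ∑ k, ∑ w1 : Fin n → V1, ∑ w2 : Fin n → V2,
        A i k * τ1 k w1 * τ2 k w2 * ((1 / (n : ℝ)) * ∑ t, c i t (w1 t) (w2 t))
      = (1 / (n : ℝ)) * ∑ t, ∑ i, ∑ k, ∑ v1, ∑ v2,
          A i k * marg n (τ1 k) t v1 * marg n (τ2 k) t v2 * c i t v1 v2 := by
  calc ∑ i, ∑ k, ∑ w1 : Fin n → V1, ∑ w2 : Fin n → V2,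
        A i k * τ1 k w1 * τ2 k w2 * ((1 / (n : ℝ)) * ∑ t, c i t (w1 t) (w2 t))
      = ∑ i, ∑ k, ∑ t, (1 / (n : ℝ)) * ∑ v1, ∑ v2,
          A i k * marg n (τ1 k) t v1 * marg n (τ2 k) t v2 * c i t v1 v2 := by
        exact Finset.sum_congr rfl fun i _ => Finset.sum_congr rfl fun k _ =>
          core_one n (A i k) (τ1 k) (τ2 k) (c i)
    _ = ∑ i, ∑ t, ∑ k, (1 / (n : ℝ)) * ∑ v1, ∑ v2,
          A i k * marg n (τ1 k) t v1 * marg n (τ2 k) t v2 * c i t v1 v2 :=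
        Finset.sum_congr rfl fun i _ => Finset.sum_comm
    _ = ∑ t, ∑ i, ∑ k, (1 / (n : ℝ)) * ∑ v1, ∑ v2,
          A i k * marg n (τ1 k) t v1 * marg n (τ2 k) t v2 * c i t v1 v2 :=
        Finset.sum_comm
    _ = _ := by
        simp_rw [Finset.mul_sum]

end AuxCore


section MainAux
variable {U M0 M1 M2 V1 V2 : Type*}
variable [Fintype U] [Fintype M0] [Fintype M1] [Fintype M2] [Fintype V1] [Fintype V2]
variable [DecidableEq V1] [DecidableEq V2]

lemma decomp1 (n : ℕ) (P : (Fin n → U) → M0 → M1 → M2 → ℝ) (c1 : U → V1 → V2 → ℝ)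
    (τ1 : M0 → M1 → (Fin n → V1) → ℝ) (τ2 : M0 → M2 → (Fin n → V2) → ℝ) (m0 : M0) (m1 : M1) :
    PsiBlock1 n P c1 τ1 τ2 m0 m1
      = (1 / (n : ℝ)) * ∑ t, PsiStage1 n P c1 (stageMarginal1 n τ1 t)
          (stageMarginal2 n τ2 t) t m0 m1 :=
  core_two n (fun un m2 => P un m0 m1 m2) (fun _ => τ1 m0 m1) (fun m2 => τ2 m0 m2)
    (fun un t v1 v2 => c1 (un t) v1 v2)

lemma decomp2 (n : ℕ) (P : (Fin n → U) → M0 → M1 → M2 → ℝ) (c2 : U → V1 → V2 → ℝ)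
    (τ1 : M0 → M1 → (Fin n → V1) → ℝ) (τ2 : M0 → M2 → (Fin n → V2) → ℝ) (m0 : M0) (m2 : M2) :
    PsiBlock2 n P c2 τ1 τ2 m0 m2
      = (1 / (n : ℝ)) * ∑ t, PsiStage2 n P c2 (stageMarginal1 n τ1 t)
          (stageMarginal2 n τ2 t) t m0 m2 :=
  core_two n (fun un m1 => P un m0 m1 m2) (fun m1 => τ1 m0 m1) (fun _ => τ2 m0 m2)
    (fun un t v1 v2 => c2 (un t) v1 v2)

lemma psiStage1_congr (n : ℕ) (P : (Fin n → U) → M0 → M1 → M2 → ℝ) (c1 : U → V1 → V2 → ℝ)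
    (σ1 σ1' : M0 → M1 → V1 → ℝ) (σ2 : M0 → M2 → V2 → ℝ) (t : Fin n) (m0 : M0) (m1 : M1)
    (h : ∀ v, σ1 m0 m1 v = σ1' m0 m1 v) :
    PsiStage1 n P c1 σ1 σ2 t m0 m1 = PsiStage1 n P c1 σ1' σ2 t m0 m1 := by
  unfold PsiStage1
  simp_rw [h]

lemma psiStage2_congr (n : ℕ) (P : (Fin n → U) → M0 → M1 → M2 → ℝ) (c2 : U → V1 → V2 → ℝ)
    (σ1 : M0 → M1 → V1 → ℝ) (σ2 σ2' : M0 → M2 → V2 → ℝ) (t : Fin n) (m0 : M0) (m2 : M2)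
    (h : ∀ v, σ2 m0 m2 v = σ2' m0 m2 v) :
    PsiStage2 n P c2 σ1 σ2 t m0 m2 = PsiStage2 n P c2 σ1 σ2' t m0 m2 := by
  unfold PsiStage2
  simp_rw [h]

end MainAux

/-- **Every Bayes-Nash equilibrium of the block game induces, at every stage `t`,
a Bayes-Nash equilibrium of the stage-`t` game via the stage marginals.** -/
theorem stmt_3 [DecidableEq V1] [DecidableEq V2] (n : ℕ) (hn : 0 < n)
    (P : (Fin n → U) → M0 → M1 → M2 → ℝ) (hPnn : ∀ un m0 m1 m2, 0 ≤ P un m0 m1 m2)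
    (hP1 : ∑ un : Fin n → U, ∑ m0 : M0, ∑ m1 : M1, ∑ m2 : M2, P un m0 m1 m2 = 1)
    (c1 c2 : U → V1 → V2 → ℝ)
    (τ1 : M0 → M1 → (Fin n → V1) → ℝ) (τ2 : M0 → M2 → (Fin n → V2) → ℝ)
    (hτ1 : ∀ m0 m1, IsDist (τ1 m0 m1)) (hτ2 : ∀ m0 m2, IsDist (τ2 m0 m2))
    (hBNE : IsBNEBlock n P c1 c2 τ1 τ2) :
    ∀ t : Fin n, IsBNEStage n P c1 c2 t (stageMarginal1 n τ1 t) (stageMarginal2 n τ2 t) := by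
  intro t
  have hpos : (0:ℝ) < 1 / (n : ℝ) := by
    have : (0:ℝ) < (n : ℝ) := by exact_mod_cast hn
    positivity
  constructor
  · intro σ1' hσ1' m0 m1
    set τ1' : M0 → M1 → (Fin n → V1) → ℝ :=
      fun a b => modStrat n t (τ1 a b) (σ1' a b) with hτ1'def
    have hdist : ∀ a b, IsDist (τ1' a b) := by
      intro a b
      constructor
      · intro w
        exact mul_nonneg ((hσ1' a b).1 _) (Finset.sum_nonneg fun _ _ => (hτ1 a b).1 _)
      · rw [hτ1'def]
        simp only
        rw [sum_modStrat, (hσ1' a b).2, (hτ1 a b).2, one_mul]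
    have hle := hBNE.1 τ1' hdist m0 m1
    rw [decomp1 n P c1 τ1 τ2 m0 m1, decomp1 n P c1 τ1' τ2 m0 m1] at hle
    have hsum := le_of_mul_le_mul_left hle hpos
    rw [← Finset.sum_erase_add Finset.univ _ (Finset.mem_univ t),
        ← Finset.sum_erase_add Finset.univ
          (fun s => PsiStage1 n P c1 (stageMarginal1 n τ1' s) (stageMarginal2 n τ2 s) s m0 m1)
          (Finset.mem_univ t)] at hsum
    have heq : ∑ s ∈ Finset.univ.erase t,
          PsiStage1 n P c1 (stageMarginal1 n τ1' s) (stageMarginal2 n τ2 s) s m0 m1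
        = ∑ s ∈ Finset.univ.erase t,
          PsiStage1 n P c1 (stageMarginal1 n τ1 s) (stageMarginal2 n τ2 s) s m0 m1 := by
      refine Finset.sum_congr rfl fun s hs => ?_
      refine psiStage1_congr n P c1 _ _ _ s m0 m1 fun v => ?_
      exact marg_modStrat_ne n t (τ1 m0 m1) (σ1' m0 m1) (hσ1' m0 m1).2
        (Finset.ne_of_mem_erase hs) v
    rw [heq] at hsum
    have hfin := (add_le_add_iff_left _).mp hsum
    calc PsiStage1 n P c1 (stageMarginal1 n τ1 t) (stageMarginal2 n τ2 t) t m0 m1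
        ≤ PsiStage1 n P c1 (stageMarginal1 n τ1' t) (stageMarginal2 n τ2 t) t m0 m1 := hfin
      _ = PsiStage1 n P c1 σ1' (stageMarginal2 n τ2 t) t m0 m1 := by
          refine psiStage1_congr n P c1 _ _ _ t m0 m1 fun v => ?_
          exact marg_modStrat_self n t (τ1 m0 m1) (σ1' m0 m1) (hτ1 m0 m1).2 v
  · intro σ2' hσ2' m0 m2
    set τ2' : M0 → M2 → (Fin n → V2) → ℝ :=
      fun a b => modStrat n t (τ2 a b) (σ2' a b) with hτ2'def
    have hdist : ∀ a b, IsDist (τ2' a b) := by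
      intro a b
      constructor
      · intro w
        exact mul_nonneg ((hσ2' a b).1 _) (Finset.sum_nonneg fun _ _ => (hτ2 a b).1 _)
      · rw [hτ2'def]
        simp only
        rw [sum_modStrat, (hσ2' a b).2, (hτ2 a b).2, one_mul]
    have hle := hBNE.2 τ2' hdist m0 m2
    rw [decomp2 n P c2 τ1 τ2 m0 m2, decomp2 n P c2 τ1 τ2' m0 m2] at hle
    have hsum := le_of_mul_le_mul_left hle hpos
    rw [← Finset.sum_erase_add Finset.univ _ (Finset.mem_univ t),
        ← Finset.sum_erase_add Finset.univ
          (fun s => PsiStage2 n P c2 (stageMarginal1 n τ1 s) (stageMarginal2 n τ2' s) s m0 m2)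
          (Finset.mem_univ t)] at hsum
    have heq : ∑ s ∈ Finset.univ.erase t,
          PsiStage2 n P c2 (stageMarginal1 n τ1 s) (stageMarginal2 n τ2' s) s m0 m2
        = ∑ s ∈ Finset.univ.erase t,
          PsiStage2 n P c2 (stageMarginal1 n τ1 s) (stageMarginal2 n τ2 s) s m0 m2 := by
      refine Finset.sum_congr rfl fun s hs => ?_
      refine psiStage2_congr n P c2 _ _ _ s m0 m2 fun v => ?_
      exact marg_modStrat_ne n t (τ2 m0 m2) (σ2' m0 m2) (hσ2' m0 m2).2
        (Finset.ne_of_mem_erase hs) v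
    rw [heq] at hsum
    have hfin := (add_le_add_iff_left _).mp hsum
    calc PsiStage2 n P c2 (stageMarginal1 n τ1 t) (stageMarginal2 n τ2 t) t m0 m2
        ≤ PsiStage2 n P c2 (stageMarginal1 n τ1 t) (stageMarginal2 n τ2' t) t m0 m2 := hfin
      _ = PsiStage2 n P c2 (stageMarginal1 n τ1 t) σ2' t m0 m2 := by
          refine psiStage2_congr n P c2 _ _ _ t m0 m2 fun v => ?_
          exact marg_modStrat_self n t (τ2 m0 m2) (σ2' m0 m2) (hτ2 m0 m2).2 v
end

section
/- Product of stagewise Bayes-Nash equilibria is a block Bayes-Nash equilibrium: if for each t ∈ {1,...,n} the pair (τ_{1,t}, τ_{2,t}) is a Bayes-Nash equilibrium of the stage-t game G^{σ,t}, then the product strategies defined by P^{τ_1}(v_1^n | m_0,m_1) = ∏_{t=1}^n P^{τ_{1,t}}(v_{1,t}|m_0,m_1) and P^{τ_2}(v_2^n | m_0,m_2) = ∏_{t=1}^n P^{τ_{2,t}}(v_{2,t}|m_0,m_2) form a Bayes-Nash equilibrium of the n-stage block game G^σ. -/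
open Finset

variable {U M0 M1 M2 V1 V2 : Type*}
variable [Fintype U] [Fintype M0] [Fintype M1] [Fintype M2] [Fintype V1] [Fintype V2]

section AuxBNE
set_option linter.unusedSectionVars false

lemma auxL1 {V : Type*} [Fintype V] (n : ℕ) (h : Fin n → V → ℝ)
    (hs : ∀ s, ∑ v, h s v = 1) (g : V → ℝ) (t : Fin n) :
    ∑ vn : Fin n → V, (∏ s, h s (vn s)) * g (vn t) = ∑ v, h t v * g v := by
  classical
  have key := Finset.prod_univ_sum (fun _ : Fin n => (Finset.univ : Finset V))
      (fun s v => h s v * if s = t then g v else 1)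
  rw [Fintype.piFinset_univ] at key
  calc ∑ vn : Fin n → V, (∏ s, h s (vn s)) * g (vn t)
      = ∑ vn : Fin n → V, ∏ s, (h s (vn s) * if s = t then g (vn s) else 1) := by
        refine Finset.sum_congr rfl fun vn _ => ?_
        rw [Finset.prod_mul_distrib, Finset.prod_ite_eq' Finset.univ t (fun s => g (vn s))]
        simp
    _ = ∏ s, ∑ v, (h s v * if s = t then g v else 1) := key.symm
    _ = ∑ v, h t v * g v := by
        rw [Finset.prod_eq_single t]
        · simp
        · intro s _ hst; simp [hst, hs s]
        · simp

lemma auxL2 {V : Type*} [Fintype V] [DecidableEq V] (n : ℕ) (τ : (Fin n → V) → ℝ)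
    (g : V → ℝ) (t : Fin n) :
    ∑ vn : Fin n → V, τ vn * g (vn t)
      = ∑ v, (∑ vn : Fin n → V, if vn t = v then τ vn else 0) * g v := by
  have h : ∀ vn : Fin n → V, τ vn * g (vn t) = ∑ v, if vn t = v then τ vn * g v else 0 := by
    intro vn; rw [Finset.sum_ite_eq]; simp
  simp only [h]
  rw [Finset.sum_comm]
  refine Finset.sum_congr rfl fun v _ => ?_
  rw [Finset.sum_mul]
  refine Finset.sum_congr rfl fun vn _ => ?_
  by_cases hv : vn t = v <;> simp [hv]

lemma auxMargProd {V : Type*} [Fintype V] [DecidableEq V] (n : ℕ) (h : Fin n → V → ℝ)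
    (hs : ∀ s, ∑ v, h s v = 1) (t : Fin n) (v : V) :
    ∑ vn : Fin n → V, (if vn t = v then ∏ s, h s (vn s) else 0) = h t v := by
  have key := auxL1 n h hs (fun w => if w = v then 1 else 0) t
  simp only [mul_ite, mul_one, mul_zero] at key
  rw [key, Finset.sum_ite_eq']
  simp

lemma auxMargDist {V : Type*} [Fintype V] [DecidableEq V] (n : ℕ) (τ : (Fin n → V) → ℝ)
    (hτ : IsDist τ) (t : Fin n) :
    IsDist (fun v => ∑ vn : Fin n → V, if vn t = v then τ vn else 0) := by
  constructor
  · intro v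
    refine Finset.sum_nonneg fun vn _ => ?_
    by_cases hv : vn t = v <;> simp [hv, hτ.1 vn]
  · rw [Finset.sum_comm]
    rw [← hτ.2]
    refine Finset.sum_congr rfl fun vn _ => ?_
    rw [Finset.sum_ite_eq]
    simp

lemma auxG {V W : Type*} [Fintype V] [Fintype W] [DecidableEq V]
    (n : ℕ) (τ1 : (Fin n → V) → ℝ) (h2 : Fin n → W → ℝ)
    (hs2 : ∀ s, ∑ w, h2 s w = 1) (t : Fin n) (g : V → W → ℝ) :
    ∑ v1n : Fin n → V, ∑ v2n : Fin n → W, τ1 v1n * (∏ s, h2 s (v2n s)) * g (v1n t) (v2n t)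
      = ∑ v, ∑ w, (∑ v1n : Fin n → V, if v1n t = v then τ1 v1n else 0) * h2 t w * g v w := by
  calc
    _ = ∑ v1n : Fin n → V, ∑ v2n : Fin n → W,
          (∏ s, h2 s (v2n s)) * (τ1 v1n * g (v1n t) (v2n t)) := by
        exact Finset.sum_congr rfl fun v1n _ => Finset.sum_congr rfl fun v2n _ => by ring
    _ = ∑ v1n : Fin n → V, ∑ w, h2 t w * (τ1 v1n * g (v1n t) w) := by
        exact Finset.sum_congr rfl fun v1n _ =>
          auxL1 n h2 hs2 (fun w => τ1 v1n * g (v1n t) w) t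
    _ = ∑ w, ∑ v1n : Fin n → V, τ1 v1n * (h2 t w * g (v1n t) w) := by
        rw [Finset.sum_comm]
        exact Finset.sum_congr rfl fun w _ => Finset.sum_congr rfl fun v1n _ => by ring
    _ = ∑ w, ∑ v, (∑ v1n : Fin n → V, if v1n t = v then τ1 v1n else 0) * (h2 t w * g v w) := by
        exact Finset.sum_congr rfl fun w _ => auxL2 n τ1 (fun v => h2 t w * g v w) t
    _ = _ := by
        rw [Finset.sum_comm]
        exact Finset.sum_congr rfl fun v _ => Finset.sum_congr rfl fun w _ => by ring

lemma auxG2 {V W : Type*} [Fintype V] [Fintype W] [DecidableEq W]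
    (n : ℕ) (h1 : Fin n → V → ℝ) (hs1 : ∀ s, ∑ v, h1 s v = 1)
    (τ2 : (Fin n → W) → ℝ) (t : Fin n) (g : V → W → ℝ) :
    ∑ v1n : Fin n → V, ∑ v2n : Fin n → W, (∏ s, h1 s (v1n s)) * τ2 v2n * g (v1n t) (v2n t)
      = ∑ v, ∑ w, h1 t v * (∑ v2n : Fin n → W, if v2n t = w then τ2 v2n else 0) * g v w := by
  calc
    _ = ∑ v2n : Fin n → W, ∑ v1n : Fin n → V,
          τ2 v2n * (∏ s, h1 s (v1n s)) * g (v1n t) (v2n t) := by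
        rw [Finset.sum_comm]
        exact Finset.sum_congr rfl fun v2n _ => Finset.sum_congr rfl fun v1n _ => by ring
    _ = ∑ w, ∑ v, (∑ v2n : Fin n → W, if v2n t = w then τ2 v2n else 0) * h1 t v
          * g v w := auxG n τ2 h1 hs1 t (fun w v => g v w)
    _ = _ := by
        rw [Finset.sum_comm]
        exact Finset.sum_congr rfl fun v _ => Finset.sum_congr rfl fun w _ => by ring

lemma pull_swap {A B : Type*} [Fintype A] [Fintype B] (n : ℕ) (r : ℝ)
    (F : Fin n → A → B → ℝ) :
    ∑ a, ∑ b, r * ∑ t, F t a b = r * ∑ t, ∑ a, ∑ b, F t a b := by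
  simp only [← Finset.mul_sum]
  congr 1
  calc ∑ a, ∑ b, ∑ t, F t a b = ∑ a, ∑ t, ∑ b, F t a b :=
        Finset.sum_congr rfl fun _ _ => Finset.sum_comm
    _ = ∑ t, ∑ a, ∑ b, F t a b := Finset.sum_comm
end AuxBNE

lemma blockEq1 {U M0 M1 M2 V1 V2 : Type*}
    [Fintype U] [Fintype M0] [Fintype M1] [Fintype M2] [Fintype V1] [Fintype V2]
    [DecidableEq V1] (n : ℕ)
    (P : (Fin n → U) → M0 → M1 → M2 → ℝ) (c1 : U → V1 → V2 → ℝ)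
    (τ1 : M0 → M1 → (Fin n → V1) → ℝ) (σ2 : Fin n → M0 → M2 → V2 → ℝ)
    (hσ2 : ∀ t m0 m2, ∑ v, σ2 t m0 m2 v = 1) (m0 : M0) (m1 : M1) :
    PsiBlock1 n P c1 τ1 (fun m0 m2 v2n => ∏ t, σ2 t m0 m2 (v2n t)) m0 m1
      = (1 / (n:ℝ)) * ∑ t, PsiStage1 n P c1
          (fun a b v => ∑ v1n : Fin n → V1, if v1n t = v then τ1 a b v1n else 0)
          (σ2 t) t m0 m1 := by
  classical
  simp only [PsiBlock1, PsiStage1]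
  have step : ∀ (un : Fin n → U) (m2 : M2),
      ∑ v1n : Fin n → V1, ∑ v2n : Fin n → V2,
        P un m0 m1 m2 * τ1 m0 m1 v1n * (∏ s, σ2 s m0 m2 (v2n s)) *
          ((1/(n:ℝ)) * ∑ t, c1 (un t) (v1n t) (v2n t))
      = (1/(n:ℝ)) * ∑ t, ∑ v1, ∑ v2,
          P un m0 m1 m2 * (∑ v1n : Fin n → V1, if v1n t = v1 then τ1 m0 m1 v1n else 0)
            * σ2 t m0 m2 v2 * c1 (un t) v1 v2 := by
    intro un m2
    calc
      _ = ∑ v1n : Fin n → V1, ∑ v2n : Fin n → V2, (1/(n:ℝ)) *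
            ∑ t, τ1 m0 m1 v1n * (∏ s, σ2 s m0 m2 (v2n s)) *
              (P un m0 m1 m2 * c1 (un t) (v1n t) (v2n t)) := by
          refine Finset.sum_congr rfl fun v1n _ => Finset.sum_congr rfl fun v2n _ => ?_
          simp only [Finset.mul_sum]
          exact Finset.sum_congr rfl fun t _ => by ring
      _ = (1/(n:ℝ)) * ∑ t, ∑ v1n : Fin n → V1, ∑ v2n : Fin n → V2,
            τ1 m0 m1 v1n * (∏ s, σ2 s m0 m2 (v2n s)) *
              (P un m0 m1 m2 * c1 (un t) (v1n t) (v2n t)) := pull_swap n _ _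
      _ = _ := by
          congr 1
          refine Finset.sum_congr rfl fun t _ => ?_
          rw [auxG n (τ1 m0 m1) (fun s => σ2 s m0 m2) (fun s => hσ2 s m0 m2) t
            (fun v1 v2 => P un m0 m1 m2 * c1 (un t) v1 v2)]
          exact Finset.sum_congr rfl fun v1 _ => Finset.sum_congr rfl fun v2 _ => by ring
  calc
    _ = ∑ un : Fin n → U, ∑ m2 : M2, (1/(n:ℝ)) * ∑ t, ∑ v1, ∑ v2,
          P un m0 m1 m2 * (∑ v1n : Fin n → V1, if v1n t = v1 then τ1 m0 m1 v1n else 0)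
            * σ2 t m0 m2 v2 * c1 (un t) v1 v2 :=
        Finset.sum_congr rfl fun un _ => Finset.sum_congr rfl fun m2 _ => step un m2
    _ = _ := pull_swap n _ _

lemma blockEq2 {U M0 M1 M2 V1 V2 : Type*}
    [Fintype U] [Fintype M0] [Fintype M1] [Fintype M2] [Fintype V1] [Fintype V2]
    [DecidableEq V2] (n : ℕ)
    (P : (Fin n → U) → M0 → M1 → M2 → ℝ) (c2 : U → V1 → V2 → ℝ)
    (σ1 : Fin n → M0 → M1 → V1 → ℝ) (τ2 : M0 → M2 → (Fin n → V2) → ℝ)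
    (hσ1 : ∀ t m0 m1, ∑ v, σ1 t m0 m1 v = 1) (m0 : M0) (m2 : M2) :
    PsiBlock2 n P c2 (fun m0 m1 v1n => ∏ t, σ1 t m0 m1 (v1n t)) τ2 m0 m2
      = (1 / (n:ℝ)) * ∑ t, PsiStage2 n P c2 (σ1 t)
          (fun a b v => ∑ v2n : Fin n → V2, if v2n t = v then τ2 a b v2n else 0)
          t m0 m2 := by
  classical
  simp only [PsiBlock2, PsiStage2]
  have step : ∀ (un : Fin n → U) (m1 : M1),
      ∑ v1n : Fin n → V1, ∑ v2n : Fin n → V2,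
        P un m0 m1 m2 * (∏ s, σ1 s m0 m1 (v1n s)) * τ2 m0 m2 v2n *
          ((1/(n:ℝ)) * ∑ t, c2 (un t) (v1n t) (v2n t))
      = (1/(n:ℝ)) * ∑ t, ∑ v1, ∑ v2,
          P un m0 m1 m2 * σ1 t m0 m1 v1
            * (∑ v2n : Fin n → V2, if v2n t = v2 then τ2 m0 m2 v2n else 0)
            * c2 (un t) v1 v2 := by
    intro un m1
    calc
      _ = ∑ v1n : Fin n → V1, ∑ v2n : Fin n → V2, (1/(n:ℝ)) *
            ∑ t, (∏ s, σ1 s m0 m1 (v1n s)) * τ2 m0 m2 v2n *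
              (P un m0 m1 m2 * c2 (un t) (v1n t) (v2n t)) := by
          refine Finset.sum_congr rfl fun v1n _ => Finset.sum_congr rfl fun v2n _ => ?_
          simp only [Finset.mul_sum]
          exact Finset.sum_congr rfl fun t _ => by ring
      _ = (1/(n:ℝ)) * ∑ t, ∑ v1n : Fin n → V1, ∑ v2n : Fin n → V2,
            (∏ s, σ1 s m0 m1 (v1n s)) * τ2 m0 m2 v2n *
              (P un m0 m1 m2 * c2 (un t) (v1n t) (v2n t)) := pull_swap n _ _
      _ = _ := by
          congr 1
          refine Finset.sum_congr rfl fun t _ => ?_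
          rw [auxG2 n (fun s => σ1 s m0 m1) (fun s => hσ1 s m0 m1) (τ2 m0 m2) t
            (fun v1 v2 => P un m0 m1 m2 * c2 (un t) v1 v2)]
          exact Finset.sum_congr rfl fun v1 _ => Finset.sum_congr rfl fun v2 _ => by ring
  calc
    _ = ∑ un : Fin n → U, ∑ m1 : M1, (1/(n:ℝ)) * ∑ t, ∑ v1, ∑ v2,
          P un m0 m1 m2 * σ1 t m0 m1 v1
            * (∑ v2n : Fin n → V2, if v2n t = v2 then τ2 m0 m2 v2n else 0)
            * c2 (un t) v1 v2 :=
        Finset.sum_congr rfl fun un _ => Finset.sum_congr rfl fun m1 _ => step un m1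
    _ = _ := pull_swap n _ _

set_option maxHeartbeats 1000000 in
/-- **Products of stagewise Bayes-Nash equilibria form a Bayes-Nash equilibrium of
the `n`-stage block game**: if `(σ1 t, σ2 t)` is a Bayes-Nash equilibrium of the
stage-`t` game for every `t`, then the product strategies
`τᵢ(vᵢⁿ | m₀, mᵢ) = ∏ₜ σᵢ,ₜ(vᵢ,ₜ | m₀, mᵢ)` are a Bayes-Nash equilibrium of `G^σ`. -/
theorem stmt_4 (n : ℕ) (hn : 0 < n)
    (P : (Fin n → U) → M0 → M1 → M2 → ℝ) (hPnn : ∀ un m0 m1 m2, 0 ≤ P un m0 m1 m2)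
    (hP1 : ∑ un : Fin n → U, ∑ m0 : M0, ∑ m1 : M1, ∑ m2 : M2, P un m0 m1 m2 = 1)
    (c1 c2 : U → V1 → V2 → ℝ)
    (σ1 : Fin n → M0 → M1 → V1 → ℝ) (σ2 : Fin n → M0 → M2 → V2 → ℝ)
    (hσ1 : ∀ t m0 m1, IsDist (σ1 t m0 m1)) (hσ2 : ∀ t m0 m2, IsDist (σ2 t m0 m2))
    (hBNE : ∀ t : Fin n, IsBNEStage n P c1 c2 t (σ1 t) (σ2 t)) :
    IsBNEBlock n P c1 c2
      (fun m0 m1 v1n => ∏ t, σ1 t m0 m1 (v1n t))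
      (fun m0 m2 v2n => ∏ t, σ2 t m0 m2 (v2n t)) := by
  classical
  have h1sum : ∀ t a b, ∑ v, σ1 t a b v = 1 := fun t a b => (hσ1 t a b).2
  have h2sum : ∀ t a b, ∑ v, σ2 t a b v = 1 := fun t a b => (hσ2 t a b).2
  constructor
  · intro τ1' hτ1' m0 m1
    have e1 := blockEq1 n P c1 (fun m0 m1 v1n => ∏ t, σ1 t m0 m1 (v1n t)) σ2 h2sum m0 m1
    have e1' : PsiBlock1 n P c1 (fun m0 m1 v1n => ∏ t, σ1 t m0 m1 (v1n t))
        (fun m0 m2 v2n => ∏ t, σ2 t m0 m2 (v2n t)) m0 m1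
        = (1 / (n:ℝ)) * ∑ t, PsiStage1 n P c1 (σ1 t) (σ2 t) t m0 m1 := by
      rw [e1]
      congr 1
      refine Finset.sum_congr rfl fun t _ => ?_
      refine congrArg (fun f => PsiStage1 n P c1 f (σ2 t) t m0 m1) ?_
      funext a b v
      exact auxMargProd n (fun s => σ1 s a b) (fun s => h1sum s a b) t v
    have e2 := blockEq1 n P c1 τ1' σ2 h2sum m0 m1
    rw [e1', e2]
    refine mul_le_mul_of_nonneg_left ?_ (by positivity)
    refine Finset.sum_le_sum fun t _ => ?_
    exact (hBNE t).1 _ (fun a b => auxMargDist n (τ1' a b) (hτ1' a b) t) m0 m1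
  · intro τ2' hτ2' m0 m2
    have e1 := blockEq2 n P c2 σ1 (fun m0 m2 v2n => ∏ t, σ2 t m0 m2 (v2n t)) h1sum m0 m2
    have e1' : PsiBlock2 n P c2 (fun m0 m1 v1n => ∏ t, σ1 t m0 m1 (v1n t))
        (fun m0 m2 v2n => ∏ t, σ2 t m0 m2 (v2n t)) m0 m2
        = (1 / (n:ℝ)) * ∑ t, PsiStage2 n P c2 (σ1 t) (σ2 t) t m0 m2 := by
      rw [e1]
      congr 1
      refine Finset.sum_congr rfl fun t _ => ?_
      refine congrArg (fun f => PsiStage2 n P c2 (σ1 t) f t m0 m2) ?_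
      funext a b v
      exact auxMargProd n (fun s => σ2 s a b) (fun s => h2sum s a b) t v
    have e2 := blockEq2 n P c2 σ1 τ2' h1sum m0 m2
    rw [e1', e2]
    refine mul_le_mul_of_nonneg_left ?_ (by positivity)
    refine Finset.sum_le_sum fun t _ => ?_
    exact (hBNE t).2 _ (fun a b => auxMargDist n (τ2' a b) (hτ2' a b) t) m0 m2
end

section
/- Single-letterization of the Bayesian-game equilibrium set under time sharing: fix an encoding σ, decoding strategies τ_1, τ_2, and define single-letter random variables W_0 = (M_0, T), W_1 = M_1, W_2 = M_2, U = U_T, V_i = V_{i,T} where T is uniform on {1,...,n} and independent of everything else. Then the set of Bayes-Nash equilibria of the single-letter game with distribution P^σ_{W_0W_1W_2|U} is exactly the set of conditional distributions (Q_{V_1|W_0W_1}, Q_{V_2|W_0W_2}) arising as single-letterizations of mutually-best-responding block strategies (τ_1 ∈ BR_1^σ(τ_2) and τ_2 ∈ BR_2^σ(τ_1)). -/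
open Finset

variable {U M0 M1 M2 V1 V2 : Type*}
variable [Fintype U] [Fintype M0] [Fintype M1] [Fintype M2] [Fintype V1] [Fintype V2]

/-- Expected single-letter cost of decoder 1 with type `(w₀, w₁)` in the
single-letter Bayesian game with joint distribution `Q` on `U × W₀ × W₁ × W₂`
(unnormalized by the positive weight `Q(w₀,w₁)`, which does not affect best
responses): `Ψ₁* = Σ_{w₂} Q(w₂|w₀,w₁) Σ_{v₁,v₂} q₁ q₂ Σ_u Q(u|w₀,w₁,w₂) c₁`. -/
noncomputable def PhiSL1 {W0 : Type*} [Fintype W0]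
    (Q : U → W0 → M1 → M2 → ℝ) (c1 : U → V1 → V2 → ℝ)
    (q1 : W0 → M1 → V1 → ℝ) (q2 : W0 → M2 → V2 → ℝ) (w0 : W0) (w1 : M1) : ℝ :=
  ∑ w2 : M2, ∑ u : U, ∑ v1 : V1, ∑ v2 : V2,
    Q u w0 w1 w2 * q1 w0 w1 v1 * q2 w0 w2 v2 * c1 u v1 v2

/-- Expected single-letter cost of decoder 2 with type `(w₀, w₂)`. -/
noncomputable def PhiSL2 {W0 : Type*} [Fintype W0]
    (Q : U → W0 → M1 → M2 → ℝ) (c2 : U → V1 → V2 → ℝ)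
    (q1 : W0 → M1 → V1 → ℝ) (q2 : W0 → M2 → V2 → ℝ) (w0 : W0) (w2 : M2) : ℝ :=
  ∑ w1 : M1, ∑ u : U, ∑ v1 : V1, ∑ v2 : V2,
    Q u w0 w1 w2 * q1 w0 w1 v1 * q2 w0 w2 v2 * c2 u v1 v2

/-- Bayes-Nash equilibrium of the single-letter Bayesian game with joint `Q`. -/
def IsBNESL {W0 : Type*} [Fintype W0]
    (Q : U → W0 → M1 → M2 → ℝ) (c1 c2 : U → V1 → V2 → ℝ)
    (q1 : W0 → M1 → V1 → ℝ) (q2 : W0 → M2 → V2 → ℝ) : Prop :=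
  (∀ q1' : W0 → M1 → V1 → ℝ, (∀ w0 w1, IsDist (q1' w0 w1)) →
      ∀ w0 w1, PhiSL1 Q c1 q1 q2 w0 w1 ≤ PhiSL1 Q c1 q1' q2 w0 w1) ∧
  (∀ q2' : W0 → M2 → V2 → ℝ, (∀ w0 w2, IsDist (q2' w0 w2)) →
      ∀ w0 w2, PhiSL2 Q c2 q1 q2 w0 w2 ≤ PhiSL2 Q c2 q1 q2' w0 w2)


section SLHelpers

/-- Collapse of an indicator sum against a weight function. -/
lemma coll_sum {A B : Type*} [Fintype A] [Fintype B] [DecidableEq B]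
    (g : A → ℝ) (e : A → B) (F : B → ℝ) :
    ∑ b, (∑ a, if e a = b then g a else 0) * F b = ∑ a, g a * F (e a) := by
  simp only [Finset.sum_mul, ite_mul, zero_mul]
  rw [Finset.sum_comm]
  simp [Finset.sum_ite_eq]

/-- The pushforward of a distribution along a map is a distribution. -/
lemma isDist_marg {A B : Type*} [Fintype A] [Fintype B] [DecidableEq B]
    (g : A → ℝ) (hg : IsDist g) (e : A → B) :
    IsDist (fun b => ∑ a, if e a = b then g a else 0) := by
  constructor
  · intro b
    exact Finset.sum_nonneg fun a _ => by
      by_cases h : e a = b <;> simp [h, hg.1 a]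
  · rw [Finset.sum_comm]
    simpa [Finset.sum_ite_eq] using hg.2

/-- A product of per-stage distributions is a distribution on the block. -/
lemma isDist_prodStrat {V : Type*} [Fintype V] {n : ℕ} (r : Fin n → V → ℝ)
    (hr : ∀ s, IsDist (r s)) : IsDist (fun vn : Fin n → V => ∏ s, r s (vn s)) := by
  refine ⟨fun vn => Finset.prod_nonneg fun s _ => (hr s).1 _, ?_⟩
  rw [← Fintype.prod_sum]
  exact Finset.prod_eq_one fun s _ => (hr s).2

/-- Stage-`t` marginal of a product strategy. -/
lemma marg_prodStrat {V : Type*} [Fintype V] [DecidableEq V] {n : ℕ}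
    (r : Fin n → V → ℝ) (hr : ∀ s, ∑ v, r s v = 1) (t : Fin n) (v : V) :
    (∑ vn : Fin n → V, if vn t = v then ∏ s, r s (vn s) else 0) = r t v := by
  have h1 : ∀ vn : Fin n → V, (if vn t = v then ∏ s, r s (vn s) else 0)
      = ∏ s, (if s = t then (if vn s = v then r s (vn s) else 0) else r s (vn s)) := by
    intro vn
    by_cases h : vn t = v
    · rw [if_pos h]
      refine Finset.prod_congr rfl fun s _ => ?_
      by_cases hs : s = t
      · subst hs; simp [h]
      · simp [hs]
    · rw [if_neg h]
      refine (Finset.prod_eq_zero (Finset.mem_univ t) ?_).symm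
      simp [h]
  simp only [h1]
  rw [← Fintype.prod_sum (fun (s : Fin n) (a : V) =>
    if s = t then (if a = v then r s a else 0) else r s a)]
  have h2 : ∀ s : Fin n,
      (∑ j, if s = t then (if j = v then r s j else 0) else r s j)
        = if s = t then r t v else 1 := by
    intro s
    by_cases hs : s = t
    · subst hs; simp [Finset.sum_ite_eq']
    · simp [hs, hr s]
  simp only [h2]
  simp

variable {U M0 M1 M2 V1 V2 : Type*}
variable [Fintype U] [Fintype M0] [Fintype M1] [Fintype M2] [Fintype V1] [Fintype V2]

lemma isDist_stageMarginal1 [DecidableEq V1] {n : ℕ}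
    (τ1 : M0 → M1 → (Fin n → V1) → ℝ) (h : ∀ m0 m1, IsDist (τ1 m0 m1))
    (t : Fin n) (m0 : M0) (m1 : M1) : IsDist (stageMarginal1 n τ1 t m0 m1) :=
  isDist_marg (τ1 m0 m1) (h m0 m1) (fun vn => vn t)

lemma isDist_stageMarginal2 [DecidableEq V2] {n : ℕ}
    (τ2 : M0 → M2 → (Fin n → V2) → ℝ) (h : ∀ m0 m2, IsDist (τ2 m0 m2))
    (t : Fin n) (m0 : M0) (m2 : M2) : IsDist (stageMarginal2 n τ2 t m0 m2) :=
  isDist_marg (τ2 m0 m2) (h m0 m2) (fun vn => vn t)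

lemma PhiSL1_congr {W0 : Type*} [Fintype W0]
    (Q : U → W0 → M1 → M2 → ℝ) (c1 : U → V1 → V2 → ℝ)
    {q1 q1' : W0 → M1 → V1 → ℝ} {q2 q2' : W0 → M2 → V2 → ℝ} (w0 : W0) (w1 : M1)
    (h1 : ∀ v, q1 w0 w1 v = q1' w0 w1 v) (h2 : ∀ w2 v, q2 w0 w2 v = q2' w0 w2 v) :
    PhiSL1 Q c1 q1 q2 w0 w1 = PhiSL1 Q c1 q1' q2' w0 w1 := by
  unfold PhiSL1; simp only [h1, h2]

lemma PhiSL2_congr {W0 : Type*} [Fintype W0]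
    (Q : U → W0 → M1 → M2 → ℝ) (c2 : U → V1 → V2 → ℝ)
    {q1 q1' : W0 → M1 → V1 → ℝ} {q2 q2' : W0 → M2 → V2 → ℝ} (w0 : W0) (w2 : M2)
    (h1 : ∀ w1 v, q1 w0 w1 v = q1' w0 w1 v) (h2 : ∀ v, q2 w0 w2 v = q2' w0 w2 v) :
    PhiSL2 Q c2 q1 q2 w0 w2 = PhiSL2 Q c2 q1' q2' w0 w2 := by
  unfold PhiSL2; simp only [h1, h2]

/-- Moving the innermost of five sums to the outside. -/
lemma sum_swap5 {A B C D E : Type*} [Fintype A] [Fintype B] [Fintype C] [Fintype D]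
    [Fintype E] (F : A → B → C → D → E → ℝ) :
    ∑ a, ∑ b, ∑ c, ∑ d, ∑ e, F a b c d e = ∑ e, ∑ a, ∑ b, ∑ c, ∑ d, F a b c d e :=
  calc ∑ a, ∑ b, ∑ c, ∑ d, ∑ e, F a b c d e
      = ∑ a, ∑ b, ∑ c, ∑ e, ∑ d, F a b c d e :=
        Finset.sum_congr rfl fun _ _ => Finset.sum_congr rfl fun _ _ =>
          Finset.sum_congr rfl fun _ _ => Finset.sum_comm
    _ = ∑ a, ∑ b, ∑ e, ∑ c, ∑ d, F a b c d e :=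
        Finset.sum_congr rfl fun _ _ => Finset.sum_congr rfl fun _ _ => Finset.sum_comm
    _ = ∑ a, ∑ e, ∑ b, ∑ c, ∑ d, F a b c d e :=
        Finset.sum_congr rfl fun _ _ => Finset.sum_comm
    _ = ∑ e, ∑ a, ∑ b, ∑ c, ∑ d, F a b c d e := Finset.sum_comm

section Bridge

variable [DecidableEq U] [DecidableEq V1] [DecidableEq V2] {n : ℕ}
variable {Pjoint : (Fin n → U) → M0 → M1 → M2 → ℝ}
variable {Q : U → M0 × Fin n → M1 → M2 → ℝ}

/-- Evaluation of `PhiSL1` in terms of the block distribution. -/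
lemma PhiSL1_eval
    (hQ : ∀ u m0 t m1 m2, Q u (m0, t) m1 m2 =
      (1 / (n : ℝ)) * ∑ un : Fin n → U, (if un t = u then Pjoint un m0 m1 m2 else 0))
    (c1 : U → V1 → V2 → ℝ) (q1 : (M0 × Fin n) → M1 → V1 → ℝ)
    (q2 : (M0 × Fin n) → M2 → V2 → ℝ) (m0 : M0) (t : Fin n) (m1 : M1) :
    PhiSL1 Q c1 q1 q2 (m0, t) m1 =
      (1 / (n : ℝ)) * ∑ un : Fin n → U, ∑ m2, ∑ v1, ∑ v2,
        Pjoint un m0 m1 m2 * q1 (m0, t) m1 v1 * q2 (m0, t) m2 v2 * c1 (un t) v1 v2 := by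
  unfold PhiSL1
  have key : ∀ m2 : M2,
      (∑ u, ∑ v1, ∑ v2, Q u (m0, t) m1 m2 * q1 (m0, t) m1 v1 * q2 (m0, t) m2 v2 * c1 u v1 v2)
      = (1 / (n : ℝ)) * ∑ un : Fin n → U, ∑ v1, ∑ v2,
          Pjoint un m0 m1 m2 * q1 (m0, t) m1 v1 * q2 (m0, t) m2 v2 * c1 (un t) v1 v2 := by
    intro m2
    have h1 : ∀ u, (∑ v1, ∑ v2,
        Q u (m0, t) m1 m2 * q1 (m0, t) m1 v1 * q2 (m0, t) m2 v2 * c1 u v1 v2)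
        = Q u (m0, t) m1 m2 *
            ∑ v1, ∑ v2, q1 (m0, t) m1 v1 * q2 (m0, t) m2 v2 * c1 u v1 v2 := by
      intro u
      rw [Finset.mul_sum]
      refine Finset.sum_congr rfl fun v1 _ => ?_
      rw [Finset.mul_sum]
      exact Finset.sum_congr rfl fun v2 _ => by ring
    simp only [h1]
    simp only [hQ]
    calc ∑ u, ((1 / (n : ℝ)) * ∑ un : Fin n → U,
              (if un t = u then Pjoint un m0 m1 m2 else 0)) *
            (∑ v1, ∑ v2, q1 (m0, t) m1 v1 * q2 (m0, t) m2 v2 * c1 u v1 v2)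
        = (1 / (n : ℝ)) * ∑ u, (∑ un : Fin n → U,
              (if un t = u then Pjoint un m0 m1 m2 else 0)) *
            (∑ v1, ∑ v2, q1 (m0, t) m1 v1 * q2 (m0, t) m2 v2 * c1 u v1 v2) := by
          rw [Finset.mul_sum]; exact Finset.sum_congr rfl fun u _ => by ring
      _ = (1 / (n : ℝ)) * ∑ un : Fin n → U, Pjoint un m0 m1 m2 *
            (∑ v1, ∑ v2, q1 (m0, t) m1 v1 * q2 (m0, t) m2 v2 * c1 (un t) v1 v2) := by
          rw [coll_sum (fun un : Fin n → U => Pjoint un m0 m1 m2) (fun un => un t)]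
      _ = (1 / (n : ℝ)) * ∑ un : Fin n → U, ∑ v1, ∑ v2,
            Pjoint un m0 m1 m2 * q1 (m0, t) m1 v1 * q2 (m0, t) m2 v2 * c1 (un t) v1 v2 := by
          congr 1
          refine Finset.sum_congr rfl fun un _ => ?_
          rw [Finset.mul_sum]
          refine Finset.sum_congr rfl fun v1 _ => ?_
          rw [Finset.mul_sum]
          exact Finset.sum_congr rfl fun v2 _ => by ring
  calc (∑ m2, ∑ u, ∑ v1, ∑ v2,
          Q u (m0, t) m1 m2 * q1 (m0, t) m1 v1 * q2 (m0, t) m2 v2 * c1 u v1 v2)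
      = ∑ m2, (1 / (n : ℝ)) * ∑ un : Fin n → U, ∑ v1, ∑ v2,
          Pjoint un m0 m1 m2 * q1 (m0, t) m1 v1 * q2 (m0, t) m2 v2 * c1 (un t) v1 v2 :=
        Finset.sum_congr rfl fun m2 _ => key m2
    _ = (1 / (n : ℝ)) * ∑ m2, ∑ un : Fin n → U, ∑ v1, ∑ v2,
          Pjoint un m0 m1 m2 * q1 (m0, t) m1 v1 * q2 (m0, t) m2 v2 * c1 (un t) v1 v2 := by
        rw [Finset.mul_sum]
    _ = _ := by rw [Finset.sum_comm]

/-- Evaluation of `PhiSL2` in terms of the block distribution. -/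
lemma PhiSL2_eval
    (hQ : ∀ u m0 t m1 m2, Q u (m0, t) m1 m2 =
      (1 / (n : ℝ)) * ∑ un : Fin n → U, (if un t = u then Pjoint un m0 m1 m2 else 0))
    (c2 : U → V1 → V2 → ℝ) (q1 : (M0 × Fin n) → M1 → V1 → ℝ)
    (q2 : (M0 × Fin n) → M2 → V2 → ℝ) (m0 : M0) (t : Fin n) (m2 : M2) :
    PhiSL2 Q c2 q1 q2 (m0, t) m2 =
      (1 / (n : ℝ)) * ∑ un : Fin n → U, ∑ m1, ∑ v1, ∑ v2,
        Pjoint un m0 m1 m2 * q1 (m0, t) m1 v1 * q2 (m0, t) m2 v2 * c2 (un t) v1 v2 := by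
  unfold PhiSL2
  have key : ∀ m1 : M1,
      (∑ u, ∑ v1, ∑ v2, Q u (m0, t) m1 m2 * q1 (m0, t) m1 v1 * q2 (m0, t) m2 v2 * c2 u v1 v2)
      = (1 / (n : ℝ)) * ∑ un : Fin n → U, ∑ v1, ∑ v2,
          Pjoint un m0 m1 m2 * q1 (m0, t) m1 v1 * q2 (m0, t) m2 v2 * c2 (un t) v1 v2 := by
    intro m1
    have h1 : ∀ u, (∑ v1, ∑ v2,
        Q u (m0, t) m1 m2 * q1 (m0, t) m1 v1 * q2 (m0, t) m2 v2 * c2 u v1 v2)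
        = Q u (m0, t) m1 m2 *
            ∑ v1, ∑ v2, q1 (m0, t) m1 v1 * q2 (m0, t) m2 v2 * c2 u v1 v2 := by
      intro u
      rw [Finset.mul_sum]
      refine Finset.sum_congr rfl fun v1 _ => ?_
      rw [Finset.mul_sum]
      exact Finset.sum_congr rfl fun v2 _ => by ring
    simp only [h1]
    simp only [hQ]
    calc ∑ u, ((1 / (n : ℝ)) * ∑ un : Fin n → U,
              (if un t = u then Pjoint un m0 m1 m2 else 0)) *
            (∑ v1, ∑ v2, q1 (m0, t) m1 v1 * q2 (m0, t) m2 v2 * c2 u v1 v2)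
        = (1 / (n : ℝ)) * ∑ u, (∑ un : Fin n → U,
              (if un t = u then Pjoint un m0 m1 m2 else 0)) *
            (∑ v1, ∑ v2, q1 (m0, t) m1 v1 * q2 (m0, t) m2 v2 * c2 u v1 v2) := by
          rw [Finset.mul_sum]; exact Finset.sum_congr rfl fun u _ => by ring
      _ = (1 / (n : ℝ)) * ∑ un : Fin n → U, Pjoint un m0 m1 m2 *
            (∑ v1, ∑ v2, q1 (m0, t) m1 v1 * q2 (m0, t) m2 v2 * c2 (un t) v1 v2) := by
          rw [coll_sum (fun un : Fin n → U => Pjoint un m0 m1 m2) (fun un => un t)]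
      _ = (1 / (n : ℝ)) * ∑ un : Fin n → U, ∑ v1, ∑ v2,
            Pjoint un m0 m1 m2 * q1 (m0, t) m1 v1 * q2 (m0, t) m2 v2 * c2 (un t) v1 v2 := by
          congr 1
          refine Finset.sum_congr rfl fun un _ => ?_
          rw [Finset.mul_sum]
          refine Finset.sum_congr rfl fun v1 _ => ?_
          rw [Finset.mul_sum]
          exact Finset.sum_congr rfl fun v2 _ => by ring
  calc (∑ m1, ∑ u, ∑ v1, ∑ v2,
          Q u (m0, t) m1 m2 * q1 (m0, t) m1 v1 * q2 (m0, t) m2 v2 * c2 u v1 v2)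
      = ∑ m1, (1 / (n : ℝ)) * ∑ un : Fin n → U, ∑ v1, ∑ v2,
          Pjoint un m0 m1 m2 * q1 (m0, t) m1 v1 * q2 (m0, t) m2 v2 * c2 (un t) v1 v2 :=
        Finset.sum_congr rfl fun m1 _ => key m1
    _ = (1 / (n : ℝ)) * ∑ m1, ∑ un : Fin n → U, ∑ v1, ∑ v2,
          Pjoint un m0 m1 m2 * q1 (m0, t) m1 v1 * q2 (m0, t) m2 v2 * c2 (un t) v1 v2 := by
        rw [Finset.mul_sum]
    _ = _ := by rw [Finset.sum_comm]

/-- The collapse of the stage marginals in a double sum. -/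
lemma stage_collapse (P : ℝ) (τa : (Fin n → V1) → ℝ) (τb : (Fin n → V2) → ℝ)
    (c : U → V1 → V2 → ℝ) (u : U) (t : Fin n) :
    (∑ v1, ∑ v2, P * (∑ v1n : Fin n → V1, if v1n t = v1 then τa v1n else 0)
        * (∑ v2n : Fin n → V2, if v2n t = v2 then τb v2n else 0) * c u v1 v2)
    = ∑ v1n : Fin n → V1, ∑ v2n : Fin n → V2,
        P * τa v1n * τb v2n * c u (v1n t) (v2n t) := by
  calc (∑ v1, ∑ v2, P * (∑ v1n : Fin n → V1, if v1n t = v1 then τa v1n else 0)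
        * (∑ v2n : Fin n → V2, if v2n t = v2 then τb v2n else 0) * c u v1 v2)
      = ∑ v1, (∑ v1n : Fin n → V1, if v1n t = v1 then τa v1n else 0) *
          (∑ v2, (∑ v2n : Fin n → V2, if v2n t = v2 then τb v2n else 0) * (P * c u v1 v2)) := by
        refine Finset.sum_congr rfl fun v1 _ => ?_
        conv_rhs => rw [Finset.mul_sum]
        exact Finset.sum_congr rfl fun v2 _ => by ring
    _ = ∑ v1, (∑ v1n : Fin n → V1, if v1n t = v1 then τa v1n else 0) *
          (∑ v2n : Fin n → V2, τb v2n * (P * c u v1 (v2n t))) := by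
        refine Finset.sum_congr rfl fun v1 _ => ?_
        rw [coll_sum τb (fun v2n => v2n t)]
    _ = ∑ v1n : Fin n → V1, τa v1n *
          (∑ v2n : Fin n → V2, τb v2n * (P * c u (v1n t) (v2n t))) := by
        rw [coll_sum τa (fun v1n => v1n t)]
    _ = _ := by
        refine Finset.sum_congr rfl fun v1n _ => ?_
        rw [Finset.mul_sum]
        exact Finset.sum_congr rfl fun v2n _ => by ring

/-- Bridge identity: the block cost of decoder 1 is the sum over stages of the
single-letter costs of the stage marginals. -/
lemma PsiBlock1_bridge
    (hQ : ∀ u m0 t m1 m2, Q u (m0, t) m1 m2 =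
      (1 / (n : ℝ)) * ∑ un : Fin n → U, (if un t = u then Pjoint un m0 m1 m2 else 0))
    (c1 : U → V1 → V2 → ℝ)
    (τ1 : M0 → M1 → (Fin n → V1) → ℝ) (τ2 : M0 → M2 → (Fin n → V2) → ℝ)
    (m0 : M0) (m1 : M1) :
    PsiBlock1 n Pjoint c1 τ1 τ2 m0 m1
      = ∑ t, PhiSL1 Q c1 (fun w w1 v => stageMarginal1 n τ1 w.2 w.1 w1 v)
          (fun w w2 v => stageMarginal2 n τ2 w.2 w.1 w2 v) (m0, t) m1 := by
  have hphi : ∀ t : Fin n,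
      PhiSL1 Q c1 (fun w w1 v => stageMarginal1 n τ1 w.2 w.1 w1 v)
          (fun w w2 v => stageMarginal2 n τ2 w.2 w.1 w2 v) (m0, t) m1
      = (1 / (n : ℝ)) * ∑ un : Fin n → U, ∑ m2, ∑ v1n : Fin n → V1, ∑ v2n : Fin n → V2,
          Pjoint un m0 m1 m2 * τ1 m0 m1 v1n * τ2 m0 m2 v2n * c1 (un t) (v1n t) (v2n t) := by
    intro t
    rw [PhiSL1_eval hQ]
    congr 1
    refine Finset.sum_congr rfl fun un _ => Finset.sum_congr rfl fun m2 _ => ?_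
    simpa only [stageMarginal1, stageMarginal2] using
      stage_collapse (Pjoint un m0 m1 m2) (τ1 m0 m1) (τ2 m0 m2) c1 (un t) t
  simp only [hphi]
  unfold PsiBlock1
  calc (∑ un : Fin n → U, ∑ m2 : M2, ∑ v1n : Fin n → V1, ∑ v2n : Fin n → V2,
          Pjoint un m0 m1 m2 * τ1 m0 m1 v1n * τ2 m0 m2 v2n *
            ((1 / (n : ℝ)) * ∑ t, c1 (un t) (v1n t) (v2n t)))
      = ∑ un : Fin n → U, ∑ m2 : M2, ∑ v1n : Fin n → V1, ∑ v2n : Fin n → V2, ∑ t,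
          (1 / (n : ℝ)) * (Pjoint un m0 m1 m2 * τ1 m0 m1 v1n * τ2 m0 m2 v2n *
            c1 (un t) (v1n t) (v2n t)) := by
        refine Finset.sum_congr rfl fun un _ => Finset.sum_congr rfl fun m2 _ =>
          Finset.sum_congr rfl fun v1n _ => Finset.sum_congr rfl fun v2n _ => ?_
        rw [Finset.mul_sum, Finset.mul_sum]
        exact Finset.sum_congr rfl fun t _ => by ring
    _ = ∑ t, ∑ un : Fin n → U, ∑ m2 : M2, ∑ v1n : Fin n → V1, ∑ v2n : Fin n → V2,
          (1 / (n : ℝ)) * (Pjoint un m0 m1 m2 * τ1 m0 m1 v1n * τ2 m0 m2 v2n *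
            c1 (un t) (v1n t) (v2n t)) := sum_swap5 _
    _ = _ := by
        refine Finset.sum_congr rfl fun t _ => ?_
        simp only [← Finset.mul_sum]

/-- Bridge identity for decoder 2. -/
lemma PsiBlock2_bridge
    (hQ : ∀ u m0 t m1 m2, Q u (m0, t) m1 m2 =
      (1 / (n : ℝ)) * ∑ un : Fin n → U, (if un t = u then Pjoint un m0 m1 m2 else 0))
    (c2 : U → V1 → V2 → ℝ)
    (τ1 : M0 → M1 → (Fin n → V1) → ℝ) (τ2 : M0 → M2 → (Fin n → V2) → ℝ)
    (m0 : M0) (m2 : M2) :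
    PsiBlock2 n Pjoint c2 τ1 τ2 m0 m2
      = ∑ t, PhiSL2 Q c2 (fun w w1 v => stageMarginal1 n τ1 w.2 w.1 w1 v)
          (fun w w2 v => stageMarginal2 n τ2 w.2 w.1 w2 v) (m0, t) m2 := by
  have hphi : ∀ t : Fin n,
      PhiSL2 Q c2 (fun w w1 v => stageMarginal1 n τ1 w.2 w.1 w1 v)
          (fun w w2 v => stageMarginal2 n τ2 w.2 w.1 w2 v) (m0, t) m2
      = (1 / (n : ℝ)) * ∑ un : Fin n → U, ∑ m1, ∑ v1n : Fin n → V1, ∑ v2n : Fin n → V2,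
          Pjoint un m0 m1 m2 * τ1 m0 m1 v1n * τ2 m0 m2 v2n * c2 (un t) (v1n t) (v2n t) := by
    intro t
    rw [PhiSL2_eval hQ]
    congr 1
    refine Finset.sum_congr rfl fun un _ => Finset.sum_congr rfl fun m1 _ => ?_
    simpa only [stageMarginal1, stageMarginal2] using
      stage_collapse (Pjoint un m0 m1 m2) (τ1 m0 m1) (τ2 m0 m2) c2 (un t) t
  simp only [hphi]
  unfold PsiBlock2
  calc (∑ un : Fin n → U, ∑ m1 : M1, ∑ v1n : Fin n → V1, ∑ v2n : Fin n → V2,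
          Pjoint un m0 m1 m2 * τ1 m0 m1 v1n * τ2 m0 m2 v2n *
            ((1 / (n : ℝ)) * ∑ t, c2 (un t) (v1n t) (v2n t)))
      = ∑ un : Fin n → U, ∑ m1 : M1, ∑ v1n : Fin n → V1, ∑ v2n : Fin n → V2, ∑ t,
          (1 / (n : ℝ)) * (Pjoint un m0 m1 m2 * τ1 m0 m1 v1n * τ2 m0 m2 v2n *
            c2 (un t) (v1n t) (v2n t)) := by
        refine Finset.sum_congr rfl fun un _ => Finset.sum_congr rfl fun m1 _ =>
          Finset.sum_congr rfl fun v1n _ => Finset.sum_congr rfl fun v2n _ => ?_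
        rw [Finset.mul_sum, Finset.mul_sum]
        exact Finset.sum_congr rfl fun t _ => by ring
    _ = ∑ t, ∑ un : Fin n → U, ∑ m1 : M1, ∑ v1n : Fin n → V1, ∑ v2n : Fin n → V2,
          (1 / (n : ℝ)) * (Pjoint un m0 m1 m2 * τ1 m0 m1 v1n * τ2 m0 m2 v2n *
            c2 (un t) (v1n t) (v2n t)) := sum_swap5 _
    _ = _ := by
        refine Finset.sum_congr rfl fun t _ => ?_
        simp only [← Finset.mul_sum]

end Bridge

end SLHelpers

set_option maxHeartbeats 2000000

/-- **Single-letterization of the Bayesian-game equilibrium set under time sharing.**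
With `W₀ = (M₀, T)`, `W₁ = M₁`, `W₂ = M₂`, `U = U_T`, `V_i = V_{i,T}` (with `T`
uniform on `{1,…,n}` and independent of everything else), the Bayes-Nash equilibria
of the single-letter game with distribution `P^σ_{W₀W₁W₂|U}` are exactly the
single-letterizations (stage marginals at time `T = t`) of pairs of block
strategies that are mutual best responses in `G^σ`. -/
theorem stmt_6 [DecidableEq U] [DecidableEq V1] [DecidableEq V2] (n : ℕ) (hn : 0 < n)
    (PU : U → ℝ) (hPU : IsDist PU)
    (σenc : (Fin n → U) → M0 → M1 → M2 → ℝ)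
    (hσ : ∀ un, IsDist (fun m : M0 × M1 × M2 => σenc un m.1 m.2.1 m.2.2))
    (c1 c2 : U → V1 → V2 → ℝ)
    -- the joint block distribution induced by the i.i.d. source and the encoding σ
    (Pjoint : (Fin n → U) → M0 → M1 → M2 → ℝ)
    (hPjoint : ∀ un m0 m1 m2,
      Pjoint un m0 m1 m2 = (∏ s, PU (un s)) * σenc un m0 m1 m2)
    -- the single-letter joint distribution of (U, W₀, W₁, W₂) = (U_T, (M₀,T), M₁, M₂)
    (Q : U → M0 × Fin n → M1 → M2 → ℝ)
    (hQ : ∀ u m0 t m1 m2, Q u (m0, t) m1 m2 =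
      (1 / (n : ℝ)) * ∑ un : Fin n → U,
        (if un t = u then Pjoint un m0 m1 m2 else 0)) :
    {p : ((M0 × Fin n) → M1 → V1 → ℝ) × ((M0 × Fin n) → M2 → V2 → ℝ) |
        (∀ w0 w1, IsDist (p.1 w0 w1)) ∧ (∀ w0 w2, IsDist (p.2 w0 w2)) ∧
        IsBNESL Q c1 c2 p.1 p.2}
    = {p : ((M0 × Fin n) → M1 → V1 → ℝ) × ((M0 × Fin n) → M2 → V2 → ℝ) |
        ∃ (τ1 : M0 → M1 → (Fin n → V1) → ℝ) (τ2 : M0 → M2 → (Fin n → V2) → ℝ),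
          (∀ m0 m1, IsDist (τ1 m0 m1)) ∧ (∀ m0 m2, IsDist (τ2 m0 m2)) ∧
          -- τ₁ ∈ BR₁^σ(τ₂)
          (∀ τ1' : M0 → M1 → (Fin n → V1) → ℝ, (∀ m0 m1, IsDist (τ1' m0 m1)) →
            ∀ m0 m1, PsiBlock1 n Pjoint c1 τ1 τ2 m0 m1 ≤ PsiBlock1 n Pjoint c1 τ1' τ2 m0 m1) ∧
          -- τ₂ ∈ BR₂^σ(τ₁)
          (∀ τ2' : M0 → M2 → (Fin n → V2) → ℝ, (∀ m0 m2, IsDist (τ2' m0 m2)) →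
            ∀ m0 m2, PsiBlock2 n Pjoint c2 τ1 τ2 m0 m2 ≤ PsiBlock2 n Pjoint c2 τ1 τ2' m0 m2) ∧
          (∀ m0 t m1 v1, p.1 (m0, t) m1 v1 = stageMarginal1 n τ1 t m0 m1 v1) ∧
          (∀ m0 t m2 v2, p.2 (m0, t) m2 v2 = stageMarginal2 n τ2 t m0 m2 v2)} := by
  classical
  ext p
  obtain ⟨p1, p2⟩ := p
  simp only [Set.mem_setOf_eq]
  constructor
  · rintro ⟨hd1, hd2, hB1, hB2⟩
    -- product (memoryless) block strategies built from the single-letter strategies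
    set τ1 : M0 → M1 → (Fin n → V1) → ℝ :=
      fun m0 m1 vn => ∏ s, p1 (m0, s) m1 (vn s) with hτ1
    set τ2 : M0 → M2 → (Fin n → V2) → ℝ :=
      fun m0 m2 vn => ∏ s, p2 (m0, s) m2 (vn s) with hτ2
    have hτ1d : ∀ m0 m1, IsDist (τ1 m0 m1) := fun m0 m1 =>
      isDist_prodStrat _ (fun s => hd1 (m0, s) m1)
    have hτ2d : ∀ m0 m2, IsDist (τ2 m0 m2) := fun m0 m2 =>
      isDist_prodStrat _ (fun s => hd2 (m0, s) m2)
    have hm1 : ∀ m0 t m1 v1, p1 (m0, t) m1 v1 = stageMarginal1 n τ1 t m0 m1 v1 := by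
      intro m0 t m1 v1
      rw [stageMarginal1, hτ1]
      exact (marg_prodStrat _ (fun s => (hd1 (m0, s) m1).2) t v1).symm
    have hm2 : ∀ m0 t m2 v2, p2 (m0, t) m2 v2 = stageMarginal2 n τ2 t m0 m2 v2 := by
      intro m0 t m2 v2
      rw [stageMarginal2, hτ2]
      exact (marg_prodStrat _ (fun s => (hd2 (m0, s) m2).2) t v2).symm
    refine ⟨τ1, τ2, hτ1d, hτ2d, ?_, ?_, hm1, hm2⟩
    · intro τ1' hτ1' m0 m1
      rw [PsiBlock1_bridge hQ c1 τ1 τ2 m0 m1, PsiBlock1_bridge hQ c1 τ1' τ2 m0 m1]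
      refine Finset.sum_le_sum fun t _ => ?_
      have hL : PhiSL1 Q c1 (fun w w1 v => stageMarginal1 n τ1 w.2 w.1 w1 v)
          (fun w w2 v => stageMarginal2 n τ2 w.2 w.1 w2 v) (m0, t) m1
          = PhiSL1 Q c1 p1 p2 (m0, t) m1 :=
        PhiSL1_congr Q c1 (m0, t) m1 (fun v => (hm1 m0 t m1 v).symm)
          (fun w2 v => (hm2 m0 t w2 v).symm)
      have hR : PhiSL1 Q c1 (fun w w1 v => stageMarginal1 n τ1' w.2 w.1 w1 v)
          (fun w w2 v => stageMarginal2 n τ2 w.2 w.1 w2 v) (m0, t) m1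
          = PhiSL1 Q c1 (fun w w1 v => stageMarginal1 n τ1' w.2 w.1 w1 v) p2 (m0, t) m1 :=
        PhiSL1_congr Q c1 (m0, t) m1 (fun v => rfl) (fun w2 v => (hm2 m0 t w2 v).symm)
      rw [hL, hR]
      exact hB1 _ (fun w0 w1 => isDist_stageMarginal1 τ1' hτ1' w0.2 w0.1 w1) (m0, t) m1
    · intro τ2' hτ2' m0 m2
      rw [PsiBlock2_bridge hQ c2 τ1 τ2 m0 m2, PsiBlock2_bridge hQ c2 τ1 τ2' m0 m2]
      refine Finset.sum_le_sum fun t _ => ?_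
      have hL : PhiSL2 Q c2 (fun w w1 v => stageMarginal1 n τ1 w.2 w.1 w1 v)
          (fun w w2 v => stageMarginal2 n τ2 w.2 w.1 w2 v) (m0, t) m2
          = PhiSL2 Q c2 p1 p2 (m0, t) m2 :=
        PhiSL2_congr Q c2 (m0, t) m2 (fun w1 v => (hm1 m0 t w1 v).symm)
          (fun v => (hm2 m0 t m2 v).symm)
      have hR : PhiSL2 Q c2 (fun w w1 v => stageMarginal1 n τ1 w.2 w.1 w1 v)
          (fun w w2 v => stageMarginal2 n τ2' w.2 w.1 w2 v) (m0, t) m2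
          = PhiSL2 Q c2 p1 (fun w w2 v => stageMarginal2 n τ2' w.2 w.1 w2 v) (m0, t) m2 :=
        PhiSL2_congr Q c2 (m0, t) m2 (fun w1 v => (hm1 m0 t w1 v).symm) (fun v => rfl)
      rw [hL, hR]
      exact hB2 _ (fun w0 w2 => isDist_stageMarginal2 τ2' hτ2' w0.2 w0.1 w2) (m0, t) m2
  · rintro ⟨τ1, τ2, hτ1d, hτ2d, hBR1, hBR2, hm1, hm2⟩
    have hp1 : ∀ w0 w1, IsDist (p1 w0 w1) := by
      rintro ⟨m0, t⟩ m1
      have he : p1 (m0, t) m1 = stageMarginal1 n τ1 t m0 m1 := funext (hm1 m0 t m1)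
      rw [he]
      exact isDist_stageMarginal1 τ1 hτ1d t m0 m1
    have hp2 : ∀ w0 w2, IsDist (p2 w0 w2) := by
      rintro ⟨m0, t⟩ m2
      have he : p2 (m0, t) m2 = stageMarginal2 n τ2 t m0 m2 := funext (hm2 m0 t m2)
      rw [he]
      exact isDist_stageMarginal2 τ2 hτ2d t m0 m2
    refine ⟨hp1, hp2, ?_, ?_⟩
    · -- decoder 1's single-letter best-response property
      intro q1' hq1' w0 w1
      obtain ⟨m0, t⟩ := w0
      -- deviation: play q1' at stage t (for type (m0, w1)), the old marginals elsewhere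
      set τ1' : M0 → M1 → (Fin n → V1) → ℝ := fun a b vn =>
        if a = m0 ∧ b = w1 then
          ∏ s, (if s = t then q1' (m0, t) w1 (vn s) else p1 (m0, s) w1 (vn s))
        else τ1 a b vn with hτ1'def
      have hr : ∀ s : Fin n, IsDist (fun v =>
          if s = t then q1' (m0, t) w1 v else p1 (m0, s) w1 v) := by
        intro s
        by_cases hs : s = t
        · simpa only [if_pos hs] using hq1' (m0, t) w1
        · simpa only [if_neg hs] using hp1 (m0, s) w1
      have hτ1'd : ∀ a b, IsDist (τ1' a b) := by
        intro a b
        by_cases h : a = m0 ∧ b = w1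
        · simp only [hτ1'def, h, and_self, if_true]
          exact isDist_prodStrat _ hr
        · simp only [hτ1'def, if_neg h]
          exact hτ1d a b
      have key := hBR1 τ1' hτ1'd m0 w1
      rw [PsiBlock1_bridge hQ c1 τ1 τ2 m0 w1, PsiBlock1_bridge hQ c1 τ1' τ2 m0 w1] at key
      -- identify the stage marginals
      have hsl' : ∀ s v, stageMarginal1 n τ1' s m0 w1 v
          = if s = t then q1' (m0, t) w1 v else p1 (m0, s) w1 v := by
        intro s v
        have hτ1'eq : τ1' m0 w1 = fun vn =>
            ∏ u, (if u = t then q1' (m0, t) w1 (vn u) else p1 (m0, u) w1 (vn u)) := by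
          funext vn; simp [hτ1'def]
        rw [stageMarginal1, hτ1'eq]
        exact marg_prodStrat _ (fun u => (hr u).2) s v
      have hA : ∀ s : Fin n, PhiSL1 Q c1 (fun w w1 v => stageMarginal1 n τ1 w.2 w.1 w1 v)
          (fun w w2 v => stageMarginal2 n τ2 w.2 w.1 w2 v) (m0, s) w1
          = PhiSL1 Q c1 p1 p2 (m0, s) w1 := fun s =>
        PhiSL1_congr Q c1 (m0, s) w1 (fun v => (hm1 m0 s w1 v).symm)
          (fun w2 v => (hm2 m0 s w2 v).symm)
      have hB : ∀ s : Fin n, PhiSL1 Q c1 (fun w w1 v => stageMarginal1 n τ1' w.2 w.1 w1 v)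
          (fun w w2 v => stageMarginal2 n τ2 w.2 w.1 w2 v) (m0, s) w1
          = PhiSL1 Q c1 (fun w w1 v =>
              if w.2 = t then q1' (m0, t) w1 v else p1 (m0, w.2) w1 v) p2 (m0, s) w1 := fun s =>
        PhiSL1_congr Q c1 (m0, s) w1 (fun v => hsl' s v)
          (fun w2 v => (hm2 m0 s w2 v).symm)
      simp only [hA, hB] at key
      -- peel off stage t
      rw [← Finset.add_sum_erase _ _ (Finset.mem_univ t),
          ← Finset.add_sum_erase _ _ (Finset.mem_univ t)] at key
      have herase : ∑ s ∈ Finset.univ.erase t,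
            PhiSL1 Q c1 (fun w w1 v =>
              if w.2 = t then q1' (m0, t) w1 v else p1 (m0, w.2) w1 v) p2 (m0, s) w1
          = ∑ s ∈ Finset.univ.erase t, PhiSL1 Q c1 p1 p2 (m0, s) w1 := by
        refine Finset.sum_congr rfl fun s hs => ?_
        have hst : s ≠ t := Finset.ne_of_mem_erase hs
        exact PhiSL1_congr Q c1 (m0, s) w1 (fun v => by simp [hst]) (fun w2 v => rfl)
      rw [herase] at key
      have hfin := le_of_add_le_add_right key
      calc PhiSL1 Q c1 p1 p2 (m0, t) w1
          ≤ PhiSL1 Q c1 (fun w w1 v =>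
              if w.2 = t then q1' (m0, t) w1 v else p1 (m0, w.2) w1 v) p2 (m0, t) w1 := hfin
        _ = PhiSL1 Q c1 q1' p2 (m0, t) w1 :=
            PhiSL1_congr Q c1 (m0, t) w1 (fun v => by simp) (fun w2 v => rfl)
    · -- decoder 2's single-letter best-response property
      intro q2' hq2' w0 w2
      obtain ⟨m0, t⟩ := w0
      set τ2' : M0 → M2 → (Fin n → V2) → ℝ := fun a b vn =>
        if a = m0 ∧ b = w2 then
          ∏ s, (if s = t then q2' (m0, t) w2 (vn s) else p2 (m0, s) w2 (vn s))
        else τ2 a b vn with hτ2'def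
      have hr : ∀ s : Fin n, IsDist (fun v =>
          if s = t then q2' (m0, t) w2 v else p2 (m0, s) w2 v) := by
        intro s
        by_cases hs : s = t
        · simpa only [if_pos hs] using hq2' (m0, t) w2
        · simpa only [if_neg hs] using hp2 (m0, s) w2
      have hτ2'd : ∀ a b, IsDist (τ2' a b) := by
        intro a b
        by_cases h : a = m0 ∧ b = w2
        · simp only [hτ2'def, h, and_self, if_true]
          exact isDist_prodStrat _ hr
        · simp only [hτ2'def, if_neg h]
          exact hτ2d a b
      have key := hBR2 τ2' hτ2'd m0 w2
      rw [PsiBlock2_bridge hQ c2 τ1 τ2 m0 w2, PsiBlock2_bridge hQ c2 τ1 τ2' m0 w2] at key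
      have hsl' : ∀ s v, stageMarginal2 n τ2' s m0 w2 v
          = if s = t then q2' (m0, t) w2 v else p2 (m0, s) w2 v := by
        intro s v
        have hτ2'eq : τ2' m0 w2 = fun vn =>
            ∏ u, (if u = t then q2' (m0, t) w2 (vn u) else p2 (m0, u) w2 (vn u)) := by
          funext vn; simp [hτ2'def]
        rw [stageMarginal2, hτ2'eq]
        exact marg_prodStrat _ (fun u => (hr u).2) s v
      have hA : ∀ s : Fin n, PhiSL2 Q c2 (fun w w1 v => stageMarginal1 n τ1 w.2 w.1 w1 v)
          (fun w w2 v => stageMarginal2 n τ2 w.2 w.1 w2 v) (m0, s) w2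
          = PhiSL2 Q c2 p1 p2 (m0, s) w2 := fun s =>
        PhiSL2_congr Q c2 (m0, s) w2 (fun w1 v => (hm1 m0 s w1 v).symm)
          (fun v => (hm2 m0 s w2 v).symm)
      have hB : ∀ s : Fin n, PhiSL2 Q c2 (fun w w1 v => stageMarginal1 n τ1 w.2 w.1 w1 v)
          (fun w w2 v => stageMarginal2 n τ2' w.2 w.1 w2 v) (m0, s) w2
          = PhiSL2 Q c2 p1 (fun w w2' v =>
              if w.2 = t then q2' (m0, t) w2' v else p2 (m0, w.2) w2' v) (m0, s) w2 := by
        intro s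
        calc PhiSL2 Q c2 (fun w w1 v => stageMarginal1 n τ1 w.2 w.1 w1 v)
              (fun w w2 v => stageMarginal2 n τ2' w.2 w.1 w2 v) (m0, s) w2
            = PhiSL2 Q c2 p1 (fun w w2 v => stageMarginal2 n τ2' w.2 w.1 w2 v) (m0, s) w2 :=
              PhiSL2_congr Q c2 (m0, s) w2 (fun w1 v => (hm1 m0 s w1 v).symm) (fun v => rfl)
          _ = _ := PhiSL2_congr Q c2 (m0, s) w2 (fun w1 v => rfl) (fun v => hsl' s v)
      simp only [hA, hB] at key
      rw [← Finset.add_sum_erase _ _ (Finset.mem_univ t),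
          ← Finset.add_sum_erase _ _ (Finset.mem_univ t)] at key
      have herase : ∑ s ∈ Finset.univ.erase t,
            PhiSL2 Q c2 p1 (fun w w2' v =>
              if w.2 = t then q2' (m0, t) w2' v else p2 (m0, w.2) w2' v) (m0, s) w2
          = ∑ s ∈ Finset.univ.erase t, PhiSL2 Q c2 p1 p2 (m0, s) w2 := by
        refine Finset.sum_congr rfl fun s hs => ?_
        have hst : s ≠ t := Finset.ne_of_mem_erase hs
        exact PhiSL2_congr Q c2 (m0, s) w2 (fun w1 v => rfl) (fun v => by simp [hst])
      rw [herase] at key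
      have hfin := le_of_add_le_add_right key
      calc PhiSL2 Q c2 p1 p2 (m0, t) w2
          ≤ PhiSL2 Q c2 p1 (fun w w2' v =>
              if w.2 = t then q2' (m0, t) w2' v else p2 (m0, w.2) w2' v) (m0, t) w2 := hfin
        _ = PhiSL2 Q c2 p1 q2' (m0, t) w2 :=
            PhiSL2_congr Q c2 (m0, t) w2 (fun w1 v => rfl) (fun v => by simp)
end

section
/- High-probability closeness of posteriors from vanishing average divergence: let B_{α,γ,δ} be the event that the fraction of indices t with D(P^{m_1,m_2,m_0}_{U_t} || Q_{U|W_0W_1W_2}(·|w_{0,t},w_{1,t},w_{2,t})) ≤ α²/(2 ln 2) is at least 1 − γ. If Q_{W_0W_1W_2|U} is such that the conditional expected average divergence is at most η + δ + 2/n + 2 log₂|U|·P(E_δ = 1), then 1 − P^σ(B_{α,γ,δ}) ≤ ε₂ + (2 ln 2)/(α²γ)·(η + δ + 2/n + 2 log₂|U|·P(E_δ=1)), where ε₂ bounds P(E_δ = 1). Consequently, for all ε > 0, α > 0, γ > 0 there exist δ̄ > 0 and n̄ such that for all δ ≤ δ̄ and n ≥ n̄ there is a strategy σ with 1 − P^σ(B_{α,γ,δ})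 ≤ ε. -/
open Finset

/-- Data of a (finite) probability space carrying the time-indexed divergences
`D t = D(P^{m₁,m₂,m₀}_{U_t} ‖ Q_{U|W₀W₁W₂}(·|w₀,ₜ,w₁,ₜ,w₂,ₜ))` and the
atypicality indicator `E = E_δ` of a strategic Gray-Wyner coding scheme. -/
structure BD (n : ℕ) where
  Ω : Type
  fin : Fintype Ω
  P : Ω → ℝ
  D : Fin n → Ω → ℝ
  E : Ω → Bool

attribute [instance] BD.fin

/-- `P` is a probability distribution and the divergences are nonnegative. -/
def BD.Good {n : ℕ} (d : BD n) : Prop :=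
  (∀ ω, 0 ≤ d.P ω) ∧ (∑ ω, d.P ω = 1) ∧ (∀ t ω, 0 ≤ d.D t ω)

/-- `P(E_δ = 1)`. -/
noncomputable def BD.PE1 {n : ℕ} (d : BD n) : ℝ :=
  ∑ ω ∈ Finset.univ.filter (fun ω => d.E ω = true), d.P ω

/-- Conditional expectation `E[(1/n)·Σₜ Dₜ | E_δ = 0]` of the average divergence. -/
noncomputable def BD.condAvgD {n : ℕ} (d : BD n) : ℝ :=
  (∑ ω ∈ Finset.univ.filter (fun ω => d.E ω = false),
      d.P ω * ((1 / (n : ℝ)) * ∑ t, d.D t ω)) /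
    (∑ ω ∈ Finset.univ.filter (fun ω => d.E ω = false), d.P ω)

/-- `P(B_{α,γ,δ})`: probability that the fraction of indices `t` with
`D t ≤ α²/(2 ln 2)` is at least `1 - γ`. -/
noncomputable def BD.PB {n : ℕ} (d : BD n) (α γ : ℝ) : ℝ :=
  ∑ ω ∈ Finset.univ.filter (fun ω => 1 - γ ≤
      ((Finset.univ.filter (fun t : Fin n =>
        d.D t ω ≤ α ^ 2 / (2 * Real.log 2))).card : ℝ) / n),
    d.P ω

theorem stmt_16_aux1 (logU : ℝ) (hlogU : 0 ≤ logU) :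
    (∀ (n : ℕ), 0 < n → ∀ (d : BD n) (α γ η δ ε2 : ℝ),
      0 < α → 0 < γ → 0 ≤ η → 0 ≤ δ → d.Good →
      d.PE1 ≤ ε2 →
      d.condAvgD ≤ η + δ + 2 / (n : ℝ) + 2 * logU * d.PE1 →
      1 - d.PB α γ ≤ ε2 + (2 * Real.log 2) / (α ^ 2 * γ) *
        (η + δ + 2 / (n : ℝ) + 2 * logU * d.PE1)) := by
  intro n hn d α γ η δ ε2 hα hγ hη hδ hGood hPE1 hconda
  obtain ⟨hP0, hPsum, hD0⟩ := hGood
  have hln2 : (0:ℝ) < Real.log 2 := Real.log_pos (by norm_num)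
  have hcpos : (0:ℝ) < α ^ 2 / (2 * Real.log 2) := by positivity
  have hnR : (0:ℝ) < (n : ℝ) := by exact_mod_cast hn
  classical
  set R : ℝ := η + δ + 2 / (n : ℝ) + 2 * logU * d.PE1 with hR
  -- 1 - PB = sum over complement
  have hsplit : d.PB α γ + ∑ ω ∈ Finset.univ.filter (fun ω => ¬ (1 - γ ≤
      ((Finset.univ.filter (fun t : Fin n =>
        d.D t ω ≤ α ^ 2 / (2 * Real.log 2))).card : ℝ) / n)), d.P ω = 1 := by
    rw [BD.PB, ← hPsum]
    exact Finset.sum_filter_add_sum_filter_not _ _ _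
  set Bc := Finset.univ.filter (fun ω => ¬ (1 - γ ≤
      ((Finset.univ.filter (fun t : Fin n =>
        d.D t ω ≤ α ^ 2 / (2 * Real.log 2))).card : ℝ) / n)) with hBc
  have h1 : 1 - d.PB α γ = ∑ ω ∈ Bc, d.P ω := by linarith
  -- pointwise: on the complement, avg divergence is ≥ γ c
  have key : ∀ ω ∈ Bc, γ * (α ^ 2 / (2 * Real.log 2)) ≤ (1 / (n : ℝ)) * ∑ t, d.D t ω := by
    intro ω hω
    rw [hBc, Finset.mem_filter] at hω
    have hfrac : ((Finset.univ.filter (fun t : Fin n =>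
        d.D t ω ≤ α ^ 2 / (2 * Real.log 2))).card : ℝ) / n < 1 - γ := lt_of_not_ge hω.2
    set S := Finset.univ.filter (fun t : Fin n => d.D t ω ≤ α ^ 2 / (2 * Real.log 2)) with hS
    set T := Finset.univ.filter (fun t : Fin n => ¬ d.D t ω ≤ α ^ 2 / (2 * Real.log 2)) with hT
    have hcard : S.card + T.card = n := by
      rw [hS, hT, Finset.card_filter_add_card_filter_not]
      simp
    have hTcard : γ * n ≤ (T.card : ℝ) := by
      have hS' : (S.card : ℝ) < (1 - γ) * n := by
        rw [div_lt_iff₀ hnR] at hfrac; linarith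
      have : (S.card : ℝ) + (T.card : ℝ) = n := by exact_mod_cast hcard
      nlinarith
    have hsum1 : (T.card : ℝ) * (α ^ 2 / (2 * Real.log 2)) ≤ ∑ t ∈ T, d.D t ω := by
      have := Finset.card_nsmul_le_sum T (fun t => d.D t ω) (α ^ 2 / (2 * Real.log 2))
        (fun t ht => by
          rw [hT, Finset.mem_filter] at ht
          exact le_of_lt (lt_of_not_ge ht.2))
      simpa [nsmul_eq_mul] using this
    have hsum2 : ∑ t ∈ T, d.D t ω ≤ ∑ t, d.D t ω :=
      Finset.sum_le_sum_of_subset_of_nonneg (Finset.subset_univ T)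
        (fun t _ _ => hD0 t ω)
    have : γ * n * (α ^ 2 / (2 * Real.log 2)) ≤ ∑ t, d.D t ω := by
      calc γ * n * (α ^ 2 / (2 * Real.log 2))
          ≤ (T.card : ℝ) * (α ^ 2 / (2 * Real.log 2)) := by
            exact mul_le_mul_of_nonneg_right hTcard (le_of_lt hcpos)
        _ ≤ ∑ t ∈ T, d.D t ω := hsum1
        _ ≤ ∑ t, d.D t ω := hsum2
    calc γ * (α ^ 2 / (2 * Real.log 2))
        = (1 / (n:ℝ)) * (γ * n * (α ^ 2 / (2 * Real.log 2))) := by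
          field_simp
      _ ≤ (1 / (n:ℝ)) * ∑ t, d.D t ω :=
          mul_le_mul_of_nonneg_left this (by positivity)
  set E0 := Finset.univ.filter (fun ω => d.E ω = false) with hE0
  set num := ∑ ω ∈ E0, d.P ω * ((1 / (n : ℝ)) * ∑ t, d.D t ω) with hnum
  set den := ∑ ω ∈ E0, d.P ω with hden
  have havg0 : ∀ ω, 0 ≤ (1 / (n : ℝ)) * ∑ t, d.D t ω := fun ω =>
    mul_nonneg (by positivity) (Finset.sum_nonneg fun t _ => hD0 t ω)
  have hγc : (0:ℝ) < γ * (α ^ 2 / (2 * Real.log 2)) := by positivity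
  -- split Bc by E
  have h2 : ∑ ω ∈ Bc, d.P ω =
      ∑ ω ∈ Bc.filter (fun ω => d.E ω = true), d.P ω +
      ∑ ω ∈ Bc.filter (fun ω => ¬ d.E ω = true), d.P ω :=
    (Finset.sum_filter_add_sum_filter_not Bc _ _).symm
  have hA : ∑ ω ∈ Bc.filter (fun ω => d.E ω = true), d.P ω ≤ d.PE1 :=
    Finset.sum_le_sum_of_subset_of_nonneg
      (Finset.filter_subset_filter _ (Finset.subset_univ Bc))
      (fun ω _ _ => hP0 ω)
  have hsubE0 : Bc.filter (fun ω => ¬ d.E ω = true) ⊆ E0 := by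
    intro ω hω
    rw [Finset.mem_filter] at hω
    rw [hE0, Finset.mem_filter]
    exact ⟨Finset.mem_univ ω, Bool.eq_false_iff.mpr hω.2⟩
  have step1 : γ * (α ^ 2 / (2 * Real.log 2)) *
      ∑ ω ∈ Bc.filter (fun ω => ¬ d.E ω = true), d.P ω ≤ num := by
    rw [Finset.mul_sum]
    calc ∑ ω ∈ Bc.filter (fun ω => ¬ d.E ω = true),
          γ * (α ^ 2 / (2 * Real.log 2)) * d.P ω
        ≤ ∑ ω ∈ Bc.filter (fun ω => ¬ d.E ω = true),
            d.P ω * ((1 / (n : ℝ)) * ∑ t, d.D t ω) := by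
          refine Finset.sum_le_sum fun ω hω => ?_
          rw [Finset.mem_filter] at hω
          rw [mul_comm]
          exact mul_le_mul_of_nonneg_left (key ω hω.1) (hP0 ω)
      _ ≤ num :=
          Finset.sum_le_sum_of_subset_of_nonneg hsubE0
            (fun ω _ _ => mul_nonneg (hP0 ω) (havg0 ω))
  have hB : ∑ ω ∈ Bc.filter (fun ω => ¬ d.E ω = true), d.P ω ≤
      num / (γ * (α ^ 2 / (2 * Real.log 2))) := by
    rw [le_div_iff₀ hγc, mul_comm]
    exact step1
  -- num ≤ R
  have hnum0 : 0 ≤ num :=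
    Finset.sum_nonneg fun ω _ => mul_nonneg (hP0 ω) (havg0 ω)
  have hden0 : 0 ≤ den := Finset.sum_nonneg fun ω _ => hP0 ω
  have hden1 : den ≤ 1 := by
    rw [hden, ← hPsum]
    exact Finset.sum_le_sum_of_subset_of_nonneg (Finset.subset_univ E0)
      (fun ω _ _ => hP0 ω)
  have hcavd : d.condAvgD = num / den := rfl
  have hnumR : num ≤ R := by
    rcases eq_or_lt_of_le hden0 with hd | hd
    · have hz : ∀ ω ∈ E0, d.P ω = 0 := by
        intro ω hω
        have := (Finset.sum_eq_zero_iff_of_nonneg (fun ω _ => hP0 ω)).mp hd.symm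
        exact this ω hω
      have hnz : num = 0 := Finset.sum_eq_zero fun ω hω => by rw [hz ω hω, zero_mul]
      have hcz : d.condAvgD ≤ R := hconda
      rw [hcavd, ← hd, div_zero] at hcz
      rw [hnz]
      exact hcz
    · have h1' : num = d.condAvgD * den := by
        rw [hcavd, div_mul_cancel₀ _ (ne_of_gt hd)]
      have hca0 : 0 ≤ d.condAvgD := by
        rw [hcavd]; exact div_nonneg hnum0 hden0
      calc num = d.condAvgD * den := h1'
        _ ≤ d.condAvgD * 1 := mul_le_mul_of_nonneg_left hden1 hca0
        _ = d.condAvgD := mul_one _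
        _ ≤ R := hconda
  -- assemble
  have hfinal : num / (γ * (α ^ 2 / (2 * Real.log 2))) ≤
      (2 * Real.log 2) / (α ^ 2 * γ) * R := by
    have heq : R / (γ * (α ^ 2 / (2 * Real.log 2))) =
        (2 * Real.log 2) / (α ^ 2 * γ) * R := by
      field_simp
    rw [← heq]
    gcongr
  calc 1 - d.PB α γ = ∑ ω ∈ Bc, d.P ω := h1
    _ = ∑ ω ∈ Bc.filter (fun ω => d.E ω = true), d.P ω +
        ∑ ω ∈ Bc.filter (fun ω => ¬ d.E ω = true), d.P ω := h2
    _ ≤ ε2 + num / (γ * (α ^ 2 / (2 * Real.log 2))) :=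
        add_le_add (hA.trans hPE1) hB
    _ ≤ ε2 + (2 * Real.log 2) / (α ^ 2 * γ) * R := by linarith [hfinal]

theorem stmt_16_aux2 (logU : ℝ) (hlogU : 0 ≤ logU) :
    (∀ F : ℝ → ℝ → (n : ℕ) → BD n,
      (∀ η > (0 : ℝ), ∀ ε2 > (0 : ℝ), ∃ δbar > (0 : ℝ), ∀ δ : ℝ, 0 < δ → δ ≤ δbar →
        ∃ nbar : ℕ, ∀ n ≥ nbar,
          (F η δ n).Good ∧ (F η δ n).PE1 ≤ ε2 ∧
          (F η δ n).condAvgD ≤ η + δ + 2 / (n : ℝ) + 2 * logU * (F η δ n).PE1) →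
      ∀ ε > (0 : ℝ), ∀ α > (0 : ℝ), ∀ γ > (0 : ℝ), ∃ δbar > (0 : ℝ),
        ∀ δ : ℝ, 0 < δ → δ ≤ δbar → ∃ nbar : ℕ, ∀ n ≥ nbar,
          ∃ d : BD n, d.Good ∧ 1 - d.PB α γ ≤ ε) := by
  intro F hF ε hε α hα γ hγ
  have hln2 : (0:ℝ) < Real.log 2 := Real.log_pos (by norm_num)
  set K : ℝ := 2 * Real.log 2 / (α ^ 2 * γ) with hK
  have hKpos : 0 < K := by positivity
  set η : ℝ := ε / (4 * K) with hη
  set ε2 : ℝ := ε / (4 * (1 + 2 * K * logU)) with hε2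
  have hdenpos : (0:ℝ) < 1 + 2 * K * logU := by positivity
  have hηpos : 0 < η := by positivity
  have hε2pos : 0 < ε2 := by positivity
  obtain ⟨δ0, hδ0pos, hδ0⟩ := hF η hηpos ε2 hε2pos
  refine ⟨min δ0 (ε / (4 * K)), lt_min hδ0pos (by positivity), ?_⟩
  intro δ hδpos hδle
  obtain ⟨nbar, hnbar⟩ := hδ0 δ hδpos (le_trans hδle (min_le_left _ _))
  refine ⟨max nbar (⌈8 * K / ε⌉₊ + 1), ?_⟩
  intro n hn
  have hn1 : nbar ≤ n := le_trans (le_max_left _ _) hn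
  have hnpos : 0 < n :=
    Nat.lt_of_lt_of_le (Nat.succ_pos _)
      (le_trans (Nat.succ_le_succ (Nat.zero_le _)) (le_trans (le_max_right _ _) hn))
  have hnRpos : (0:ℝ) < (n : ℝ) := by exact_mod_cast hnpos
  obtain ⟨hGood, hPE1, hconda⟩ := hnbar n hn1
  refine ⟨F η δ n, hGood, ?_⟩
  have h := stmt_16_aux1 logU hlogU n hnpos (F η δ n) α γ η δ ε2 hα hγ (le_of_lt hηpos)
    (le_of_lt hδpos) hGood hPE1 hconda
  set p := (F η δ n).PE1 with hp
  have hPE1nn : 0 ≤ p := Finset.sum_nonneg fun ω _ => hGood.1 ω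
  have hnR : 8 * K / ε ≤ (n : ℝ) := by
    have h1 : ((⌈8 * K / ε⌉₊ : ℕ) : ℝ) ≤ (n : ℝ) := by
      exact_mod_cast le_trans (Nat.le_succ _) (le_trans (le_max_right _ _) hn)
    exact le_trans (Nat.le_ceil _) h1
  have hKη : K * η = ε / 4 := by
    rw [hη]; field_simp
  have hKδ : K * δ ≤ ε / 4 := by
    have hδ' : δ ≤ ε / (4 * K) := le_trans hδle (min_le_right _ _)
    have := mul_le_mul_of_nonneg_left hδ' hKpos.le
    calc K * δ ≤ K * (ε / (4 * K)) := this
      _ = ε / 4 := by field_simp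
  have h2n : K * (2 / (n : ℝ)) ≤ ε / 4 := by
    rw [div_le_iff₀ hε] at hnR
    rw [mul_div_assoc', div_le_iff₀ hnRpos]
    nlinarith
  have hPEb : 2 * K * logU * p ≤ 2 * K * logU * ε2 :=
    mul_le_mul_of_nonneg_left hPE1 (by positivity)
  have hε2eq : ε2 + 2 * K * logU * ε2 = ε / 4 := by
    rw [hε2]; field_simp
  have hexp : ε2 + K * (η + δ + 2 / (n : ℝ) + 2 * logU * p) =
      ε2 + K * η + K * δ + K * (2 / (n : ℝ)) + 2 * K * logU * p := by ring
  calc 1 - (F η δ n).PB α γ ≤ ε2 + K * (η + δ + 2 / (n : ℝ) + 2 * logU * p) := h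
    _ = ε2 + K * η + K * δ + K * (2 / (n : ℝ)) + 2 * K * logU * p := hexp
    _ ≤ ε := by linarith


/-- **High-probability closeness of posteriors from vanishing average divergence.**
Part 1: if `P(E_δ=1) ≤ ε₂` and the conditional expected average divergence is at
most `η + δ + 2/n + 2 log₂|𝒰|·P(E_δ=1)`, then
`1 − P^σ(B_{α,γ,δ}) ≤ ε₂ + (2 ln 2)/(α²γ)·(η + δ + 2/n + 2 log₂|𝒰|·P(E_δ=1))`.
Part 2 (consequently): if for every `η > 0, ε₂ > 0` schemes with these bounds
exist for all small `δ` and large `n`, then for all `ε, α, γ > 0` there exist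
`δ̄ > 0` and `n̄` such that for all `δ ≤ δ̄` and `n ≥ n̄` there is a scheme `σ`
with `1 − P^σ(B_{α,γ,δ}) ≤ ε`. -/
theorem stmt_16 (logU : ℝ) (hlogU : 0 ≤ logU) :
    (∀ (n : ℕ), 0 < n → ∀ (d : BD n) (α γ η δ ε2 : ℝ),
      0 < α → 0 < γ → 0 ≤ η → 0 ≤ δ → d.Good →
      d.PE1 ≤ ε2 →
      d.condAvgD ≤ η + δ + 2 / (n : ℝ) + 2 * logU * d.PE1 →
      1 - d.PB α γ ≤ ε2 + (2 * Real.log 2) / (α ^ 2 * γ) *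
        (η + δ + 2 / (n : ℝ) + 2 * logU * d.PE1)) ∧
    (∀ F : ℝ → ℝ → (n : ℕ) → BD n,
      (∀ η > (0 : ℝ), ∀ ε2 > (0 : ℝ), ∃ δbar > (0 : ℝ), ∀ δ : ℝ, 0 < δ → δ ≤ δbar →
        ∃ nbar : ℕ, ∀ n ≥ nbar,
          (F η δ n).Good ∧ (F η δ n).PE1 ≤ ε2 ∧
          (F η δ n).condAvgD ≤ η + δ + 2 / (n : ℝ) + 2 * logU * (F η δ n).PE1) →
      ∀ ε > (0 : ℝ), ∀ α > (0 : ℝ), ∀ γ > (0 : ℝ), ∃ δbar > (0 : ℝ),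
        ∀ δ : ℝ, 0 < δ → δ ≤ δbar → ∃ nbar : ℕ, ∀ n ≥ nbar,
          ∃ d : BD n, d.Good ∧ 1 - d.PB α γ ≤ ε) := by
  exact ⟨stmt_16_aux1 logU hlogU, stmt_16_aux2 logU hlogU⟩
end
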